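/- arXiv:2004.09932 — 3 statements merged into one kernel-verified Lean document; each statement's English description precedes it below -/
import Mathlib

section
/- Let v : (a,b) → ℝ be a function of bounded variation and let D̃⁻v denote the negative part of the diffuse (non-atomic) part of its distributional derivative Dv. Then for D̃⁻v-almost every point x̄ ∈ (a,b) there exists δ > 0 such that the good representative v̄ satisfies v̄(x) > v̄(x̄) for all x ∈ (x̄ - δ, x̄) and v̄(x) < v̄(x̄) for all x ∈ (x̄, x̄ + δ). -/
open MeasureTheory Set Filter Topology


lemma meas_Iic_split (ρ : Measure ℝ) [IsFiniteMeasure ρ] {s t : ℝ} (h : s ≤ t) :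
    (ρ (Iic t)).toReal - (ρ (Iic s)).toReal = (ρ (Ioc s t)).toReal := by
  have hdisj : Disjoint (Iic s) (Ioc s t) := by
    apply Set.disjoint_left.2
    rintro u hu ⟨h1, h2⟩
    exact absurd (mem_Iic.1 hu) (not_le.2 h1)
  have hu := measure_union (μ := ρ) hdisj measurableSet_Ioc
  rw [Set.Iic_union_Ioc_eq_Iic h] at hu
  rw [hu, ENNReal.toReal_add (measure_ne_top _ _) (measure_ne_top _ _)]
  ring

lemma tendsto_measure_Ioc_right (ρ : Measure ℝ) [IsFiniteMeasure ρ] (x : ℝ) :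
    Tendsto (fun t => ρ (Ioc x t)) (𝓝[>] x) (𝓝 0) := by
  rw [ENNReal.tendsto_nhds_zero]
  intro ε hε
  have hanti : Antitone (fun n : ℕ => Ioc x (x + 1 / (n + 1))) := by
    intro i j hij
    apply Ioc_subset_Ioc_right
    have : (1 : ℝ) / (j + 1) ≤ 1 / (i + 1) := by
      gcongr
    linarith
  have h0 : Tendsto (fun n : ℕ => ρ (Ioc x (x + 1 / (n + 1)))) atTop
      (𝓝 (ρ (⋂ n : ℕ, Ioc x (x + 1 / (n + 1))))) :=
    tendsto_measure_iInter_atTop (fun n => measurableSet_Ioc.nullMeasurableSet) hanti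
      ⟨0, measure_ne_top _ _⟩
  have hempty : (⋂ n : ℕ, Ioc x (x + 1 / ((n : ℝ) + 1))) = ∅ := by
    ext t
    simp only [mem_iInter, mem_Ioc, mem_empty_iff_false, iff_false, not_forall]
    by_contra hc
    push_neg at hc
    have ht : x < t := (hc 0).1
    obtain ⟨n, hn⟩ := exists_nat_one_div_lt (show (0:ℝ) < t - x by linarith)
    have := (hc n).2
    linarith
  rw [hempty, measure_empty] at h0
  obtain ⟨n, hn⟩ := (ENNReal.tendsto_nhds_zero.1 h0 ε hε).exists
  have hpos : (0:ℝ) < 1 / ((n:ℝ) + 1) := by positivity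
  filter_upwards [Ioo_mem_nhdsGT_of_mem (show x ∈ Ico x (x + 1 / ((n:ℝ)+1)) from ⟨le_refl x, by linarith⟩)] with t ht
  exact le_trans (measure_mono (Ioc_subset_Ioc_right ht.2.le)) hn

lemma tendsto_measure_Ioc_left (ρ : Measure ℝ) [IsFiniteMeasure ρ] (x : ℝ) (hx : ρ {x} = 0) :
    Tendsto (fun t => ρ (Ioc t x)) (𝓝[<] x) (𝓝 0) := by
  rw [ENNReal.tendsto_nhds_zero]
  intro ε hε
  have hanti : Antitone (fun n : ℕ => Ioc (x - 1 / (n + 1)) x) := by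
    intro i j hij
    apply Ioc_subset_Ioc_left
    have : (1 : ℝ) / (j + 1) ≤ 1 / (i + 1) := by
      gcongr
    linarith
  have h0 : Tendsto (fun n : ℕ => ρ (Ioc (x - 1 / (n + 1)) x)) atTop
      (𝓝 (ρ (⋂ n : ℕ, Ioc (x - 1 / (n + 1)) x))) :=
    tendsto_measure_iInter_atTop (fun n => measurableSet_Ioc.nullMeasurableSet) hanti
      ⟨0, measure_ne_top _ _⟩
  have hsingle : (⋂ n : ℕ, Ioc (x - 1 / ((n : ℝ) + 1)) x) = {x} := by
    ext t
    simp only [mem_iInter, mem_Ioc, mem_singleton_iff]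
    constructor
    · intro h
      by_contra hc
      have htx : t ≤ x := (h 0).2
      have ht : t < x := lt_of_le_of_ne htx hc
      obtain ⟨n, hn⟩ := exists_nat_one_div_lt (show (0:ℝ) < x - t by linarith)
      have := (h n).1
      linarith
    · rintro rfl
      intro n
      have : (0:ℝ) < 1 / ((n:ℝ) + 1) := by positivity
      exact ⟨by linarith, le_rfl⟩
  rw [hsingle, hx] at h0
  obtain ⟨n, hn⟩ := (ENNReal.tendsto_nhds_zero.1 h0 ε hε).exists
  have hpos : (0:ℝ) < 1 / ((n:ℝ) + 1) := by positivity
  filter_upwards [Ioo_mem_nhdsLT_of_mem (show x ∈ Ioc (x - 1 / ((n:ℝ)+1)) x from ⟨by linarith, le_refl x⟩)] with t ht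
  exact le_trans (measure_mono (Ioc_subset_Ioc_left ht.1.le)) hn

lemma cwa_Ici {f : ℝ → ℝ} {x : ℝ} (h : Tendsto f (𝓝[>] x) (𝓝 (f x))) :
    ContinuousWithinAt f (Ici x) x := by
  have hs : Ici x = {x} ∪ Ioi x := by
    ext t
    simp [mem_Ici, le_iff_eq_or_lt, eq_comm]
  unfold ContinuousWithinAt
  rw [hs, nhdsWithin_union, nhdsWithin_singleton]
  exact Tendsto.sup (tendsto_pure_nhds f x) h

lemma cdf_tendsto_right (ρ : Measure ℝ) [IsFiniteMeasure ρ] (x : ℝ) :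
    Tendsto (fun t => (ρ (Iic t)).toReal) (𝓝[>] x) (𝓝 ((ρ (Iic x)).toReal)) := by
  have h1 : Tendsto (fun t => (ρ (Ioc x t)).toReal) (𝓝[>] x) (𝓝 0) := by
    have := (ENNReal.tendsto_toReal (a := 0) (by simp)).comp (tendsto_measure_Ioc_right ρ x)
    simpa [Function.comp_def] using this
  have h2 : Tendsto (fun t => (ρ (Iic x)).toReal + (ρ (Ioc x t)).toReal) (𝓝[>] x)
      (𝓝 ((ρ (Iic x)).toReal)) := by
    simpa using (tendsto_const_nhds.add h1 :)
  refine h2.congr' ?_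
  filter_upwards [self_mem_nhdsWithin] with t ht
  have := meas_Iic_split ρ (le_of_lt (mem_Ioi.1 ht))
  linarith

lemma cdf_cwa (ρ : Measure ℝ) [IsFiniteMeasure ρ] (x : ℝ) :
    ContinuousWithinAt (fun t => (ρ (Iic t)).toReal) (Ici x) x :=
  cwa_Ici (cdf_tendsto_right ρ x)

lemma measure_le_volume (ρ : Measure ℝ) [IsFiniteMeasure ρ]
    (h : ∀ s t : ℝ, s ≤ t → ρ (Ioc s t) ≤ ENNReal.ofReal (t - s)) : ρ ≤ volume := by
  have hdle : ∀ {s t : ℝ}, s ≤ t → (ρ (Ioc s t)).toReal ≤ t - s := by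
    intro s t hst
    calc (ρ (Ioc s t)).toReal ≤ (ENNReal.ofReal (t - s)).toReal :=
          ENNReal.toReal_mono ENNReal.ofReal_ne_top (h s t hst)
      _ = t - s := ENNReal.toReal_ofReal (by linarith)
  have hGmono : Monotone (fun t => (ρ (Iic t)).toReal) := by
    intro s t hst
    have h1 := meas_Iic_split ρ hst
    have h2 : (0:ℝ) ≤ (ρ (Ioc s t)).toReal := ENNReal.toReal_nonneg
    simp only
    linarith
  set Gsf : StieltjesFunction ℝ := ⟨fun t => (ρ (Iic t)).toReal, hGmono, cdf_cwa ρ⟩ with hGsf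
  have hHmono : Monotone (fun t => t - (ρ (Iic t)).toReal) := by
    intro s t hst
    have h1 := meas_Iic_split ρ hst
    have h2 := hdle hst
    simp only
    linarith
  set Hsf : StieltjesFunction ℝ :=
    ⟨fun t => t - (ρ (Iic t)).toReal, hHmono,
      fun x => (continuous_id.continuousWithinAt).sub (cdf_cwa ρ x)⟩ with hHsf
  have hGm : Gsf.measure = ρ := by
    refine Measure.ext_of_Ioc _ _ fun p q hpq => ?_
    rw [StieltjesFunction.measure_Ioc]
    show ENNReal.ofReal ((ρ (Iic q)).toReal - (ρ (Iic p)).toReal) = _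
    rw [meas_Iic_split ρ hpq.le, ENNReal.ofReal_toReal (measure_ne_top _ _)]
  have hvol : (volume : Measure ℝ) = Gsf.measure + Hsf.measure := by
    refine Measure.ext_of_Ioc _ _ fun p q hpq => ?_
    rw [Real.volume_Ioc, Measure.add_apply, StieltjesFunction.measure_Ioc,
      StieltjesFunction.measure_Ioc]
    show _ = ENNReal.ofReal ((ρ (Iic q)).toReal - (ρ (Iic p)).toReal)
        + ENNReal.ofReal ((q - (ρ (Iic q)).toReal) - (p - (ρ (Iic p)).toReal))
    have e1 := meas_Iic_split ρ hpq.le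
    have e2 : (0:ℝ) ≤ (ρ (Ioc p q)).toReal := ENNReal.toReal_nonneg
    have e3 := hdle hpq.le
    rw [← ENNReal.ofReal_add (by linarith) (by linarith)]
    congr 1
    ring
  refine le_trans (le_of_eq hGm.symm) ?_
  rw [hvol]
  exact Measure.le_add_right (le_refl _)

theorem main_aux (ν σ : Measure ℝ) [IsFiniteMeasure ν] [IsFiniteMeasure σ]
    [NullSingletonClass ν] (hsing : ν.MutuallySingular σ) :
    ∀ᵐ x ∂ν, ∃ δ > 0,
      (∀ y ∈ Ioo x (x + δ), σ (Ioc x y) < ν (Ioc x y)) ∧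
      (∀ y ∈ Ioo (x - δ) x, σ (Ioc y x) < ν (Ioc y x)) := by
  set m : Measure ℝ := ν + σ with hm
  haveI : IsFiniteMeasure m := by rw [hm]; infer_instance
  set F : ℝ → ℝ := fun t => t + (m (Iic t)).toReal with hF
  have hFd : ∀ {s t : ℝ}, s ≤ t → F t - F s = (t - s) + (m (Ioc s t)).toReal := by
    intro s t hst
    have := meas_Iic_split m hst
    simp only [hF]
    linarith
  have hFmono : StrictMono F := by
    intro s t hst
    have h1 := hFd hst.le
    have h2 : (0:ℝ) ≤ (m (Ioc s t)).toReal := ENNReal.toReal_nonneg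
    linarith
  have hFmeas : Measurable F := hFmono.monotone.measurable
  have hFemb : MeasurableEmbedding F := hFmeas.measurableEmbedding hFmono.injective
  have hpre : ∀ s t : ℝ, F ⁻¹' (Ioc (F s) (F t)) = Ioc s t := by
    intro s t
    ext u
    simp [mem_preimage, mem_Ioc, hFmono.lt_iff_lt, hFmono.le_iff_le]
  set ν' := ν.map F with hν'
  set σ' := σ.map F with hσ'
  haveI : IsFiniteMeasure ν' :=
    ⟨by rw [hν', Measure.map_apply hFmeas MeasurableSet.univ]; exact measure_lt_top _ _⟩
  haveI : IsFiniteMeasure σ' :=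
    ⟨by rw [hσ', Measure.map_apply hFmeas MeasurableSet.univ]; exact measure_lt_top _ _⟩
  have hν'app : ∀ {A : Set ℝ}, MeasurableSet A → ν' A = ν (F ⁻¹' A) := by
    intro A hA; rw [hν', Measure.map_apply hFmeas hA]
  have hσ'app : ∀ {A : Set ℝ}, MeasurableSet A → σ' A = σ (F ⁻¹' A) := by
    intro A hA; rw [hσ', Measure.map_apply hFmeas hA]
  have hνIoc : ∀ s t : ℝ, ν' (Ioc (F s) (F t)) = ν (Ioc s t) := by
    intro s t; rw [hν'app measurableSet_Ioc, hpre]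
  have hσIoc : ∀ s t : ℝ, σ' (Ioc (F s) (F t)) = σ (Ioc s t) := by
    intro s t; rw [hσ'app measurableSet_Ioc, hpre]
  -- ν' is dominated by Lebesgue measure
  have hν'le : ν' ≤ volume := by
    apply measure_le_volume
    intro p q hpq
    rw [hν'app measurableSet_Ioc]
    set I := F ⁻¹' Ioc p q with hI
    have hImem : ∀ {u : ℝ}, u ∈ I ↔ p < F u ∧ F u ≤ q := by
      intro u; rw [hI, mem_preimage, mem_Ioc]
    have hpair : ∀ u v : ℝ, u ∈ I → v ∈ I → u ≤ v → ν (Ioc u v) ≤ ENNReal.ofReal (q - p) := by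
      intro u v hu hv huv
      have h1 : p < F u := (hImem.1 hu).1
      have h2 : F v ≤ q := (hImem.1 hv).2
      have h3 := hFd huv
      have h4 : (ν (Ioc u v)).toReal ≤ (m (Ioc u v)).toReal := by
        apply ENNReal.toReal_mono (measure_ne_top _ _)
        rw [hm, Measure.add_apply]
        exact le_self_add
      have h5 : (ν (Ioc u v)).toReal ≤ q - p := by linarith
      calc ν (Ioc u v) = ENNReal.ofReal (ν (Ioc u v)).toReal :=
            (ENNReal.ofReal_toReal (measure_ne_top _ _)).symm
        _ ≤ ENNReal.ofReal (q - p) := ENNReal.ofReal_le_ofReal h5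
    by_cases hne : I = ∅
    · rw [hne]; simp
    have hIne : I.Nonempty := nonempty_iff_ne_empty.2 hne
    have hIbdd_above : BddAbove I := by
      refine ⟨q, fun u hu => ?_⟩
      have : u ≤ F u := by
        simp only [hF]
        have : (0:ℝ) ≤ (m (Iic u)).toReal := ENNReal.toReal_nonneg
        linarith
      exact this.trans (hImem.1 hu).2
    have hIbdd_below : BddBelow I := by
      refine ⟨p - (m univ).toReal, fun u hu => ?_⟩
      have h1 : F u ≤ u + (m univ).toReal := by
        simp only [hF]
        have : (m (Iic u)).toReal ≤ (m univ).toReal :=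
          ENNReal.toReal_mono (measure_ne_top _ _) (measure_mono (subset_univ _))
        linarith
      have h2 : p < F u := (hImem.1 hu).1
      linarith
    set c := sInf I with hc
    set d := sSup I with hd
    have hmemI : ∀ u : ℝ, c < u → u < d → u ∈ I := by
      intro u h1 h2
      obtain ⟨i1, hi1, hi1'⟩ := exists_lt_of_csInf_lt hIne h1
      obtain ⟨i2, hi2, hi2'⟩ := exists_lt_of_lt_csSup hIne h2
      refine hImem.2 ⟨?_, ?_⟩
      · exact lt_of_lt_of_le (hImem.1 hi1).1 (hFmono.monotone hi1'.le)
      · exact le_trans (hFmono.monotone hi2'.le) (hImem.1 hi2).2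
    have hIsub : I ⊆ Icc c d := fun u hu => ⟨csInf_le hIbdd_below hu, le_csSup hIbdd_above hu⟩
    by_cases hcd : c < d
    · have hIoo : Ioo c d = ⋃ n : ℕ, Ioc (c + (d - c)/(n+2)) (d - (d - c)/(n+2)) := by
        ext t
        simp only [mem_Ioo, mem_iUnion, mem_Ioc]
        constructor
        · rintro ⟨ht1, ht2⟩
          set ε := min (t - c) (d - t) with hε
          have hεpos : 0 < ε := lt_min (by linarith) (by linarith)
          obtain ⟨n, hn⟩ := exists_nat_one_div_lt (div_pos hεpos (show (0:ℝ) < d - c by linarith))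
          have h6 := (lt_div_iff₀ (show (0:ℝ) < d - c by linarith)).1 hn
          have h5 : (d - c) / (n + 1) < ε := by
            calc (d - c)/(n+1) = 1/((n:ℝ)+1) * (d - c) := by ring
              _ < ε := h6
          have h7 : (d - c) / ((n:ℝ) + 2) ≤ (d - c) / ((n:ℝ) + 1) := by
            rw [div_le_div_iff₀ (by positivity) (by positivity)]
            nlinarith
          refine ⟨n, by linarith [min_le_left (t - c) (d - t)],
            by linarith [min_le_right (t - c) (d - t)]⟩
        · rintro ⟨n, hn1, hn2⟩
          have hδ : (0:ℝ) < (d - c) / ((n:ℝ) + 2) := div_pos (by linarith) (by positivity)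
          constructor <;> linarith
      have hmonoU : Monotone (fun n : ℕ => Ioc (c + (d - c)/(n+2)) (d - (d - c)/(n+2))) := by
        intro i j hij
        have h7 : (d - c) / ((j:ℝ) + 2) ≤ (d - c) / ((i:ℝ) + 2) := by
          have hij' : ((i:ℝ)) ≤ (j:ℝ) := by exact_mod_cast hij
          rw [div_le_div_iff₀ (by positivity) (by positivity)]
          nlinarith
        exact Ioc_subset_Ioc (by linarith) (by linarith)
      have hbound : ∀ n : ℕ, ν (Ioc (c + (d - c)/(n+2)) (d - (d - c)/(n+2)))
          ≤ ENNReal.ofReal (q - p) := by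
        intro n
        by_cases hab : c + (d - c)/((n:ℝ)+2) < d - (d - c)/((n:ℝ)+2)
        · have hδ : (0:ℝ) < (d - c) / ((n:ℝ) + 2) := div_pos (by linarith) (by positivity)
          exact hpair _ _ (hmemI _ (by linarith) (by linarith))
            (hmemI _ (by linarith) (by linarith)) hab.le
        · rw [Ioc_eq_empty hab]
          simp
      have hνIoo : ν (Ioo c d) ≤ ENNReal.ofReal (q - p) := by
        rw [hIoo, Directed.measure_iUnion hmonoU.directed_le]
        exact iSup_le hbound
      have h2 : ν (Icc c d) = ν (Ioo c d) := (measure_congr (Ioo_ae_eq_Icc (μ := ν))).symm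
      calc ν I ≤ ν (Icc c d) := measure_mono hIsub
        _ = ν (Ioo c d) := h2
        _ ≤ ENNReal.ofReal (q - p) := hνIoo
    · have hsub : I ⊆ {c} := by
        intro u hu
        have h1 := hIsub hu
        have : u = c := le_antisymm (h1.2.trans (not_lt.1 hcd)) h1.1
        simp [this]
      calc ν I ≤ ν {c} := measure_mono hsub
        _ = 0 := measure_singleton c
        _ ≤ ENNReal.ofReal (q - p) := zero_le
  -- absolute continuity and no atoms for ν'
  have hν'le' : ∀ A : Set ℝ, ν' A ≤ volume A := Measure.le_iff'.1 hν'le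
  have hac : ν' ≪ volume := Measure.absolutelyContinuous_of_le hν'le
  haveI : NullSingletonClass ν' := by
    refine ⟨fun p => le_antisymm ?_ (zero_le)⟩
    calc ν' {p} ≤ volume {p} := hν'le' {p}
      _ = 0 := Real.volume_singleton
  -- mutual singularity upstairs
  have hsing' : ν'.MutuallySingular σ' := by
    obtain ⟨B, hBm, hB1, hB2⟩ := hsing
    refine ⟨F '' B, hFemb.measurableSet_image.2 hBm, ?_, ?_⟩
    · rw [hν'app (hFemb.measurableSet_image.2 hBm),
        Set.preimage_image_eq _ hFmono.injective]
      exact hB1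
    · rw [hσ'app (hFemb.measurableSet_image.2 hBm).compl, Set.preimage_compl,
        Set.preimage_image_eq _ hFmono.injective]
      exact hB2
  -- Vitali family differentiation
  set v := IsUnifLocDoublingMeasure.vitaliFamily (volume : Measure ℝ) 1 with hv
  have D1 : ∀ᵐ p ∂ν',
      Tendsto (fun a => ν' a / volume a) (v.filterAt p) (𝓝 (ν'.rnDeriv volume p)) :=
    (v.ae_tendsto_rnDeriv ν').filter_mono hac.ae_le
  have D2 : ∀ᵐ p ∂ν',
      Tendsto (fun a => σ' a / volume a) (v.filterAt p) (𝓝 (σ'.rnDeriv volume p)) :=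
    (v.ae_tendsto_rnDeriv σ').filter_mono hac.ae_le
  have h1 : ∀ᵐ p ∂ν', 0 < ν'.rnDeriv volume p := Measure.rnDeriv_pos hac
  have h2 : ∀ᵐ p ∂ν', σ'.rnDeriv volume p = 0 := by
    obtain ⟨B, hBm, hB1, hB2⟩ := hsing'
    have hwd : ∀ A : Set ℝ, volume.withDensity (σ'.rnDeriv volume) A ≤ σ' A :=
      Measure.le_iff'.1 (Measure.withDensity_rnDeriv_le σ' volume)
    have hint : ∫⁻ t in Bᶜ, σ'.rnDeriv volume t ∂volume = 0 := by
      have hh := hwd Bᶜ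
      rw [withDensity_apply _ hBm.compl] at hh
      exact le_antisymm (hh.trans hB2.le) (zero_le)
    have hg0 : ∀ᵐ t ∂(volume.restrict Bᶜ), σ'.rnDeriv volume t = 0 :=
      (lintegral_eq_zero_iff (Measure.measurable_rnDeriv σ' volume)).1 hint
    have hgvol : ∀ᵐ t ∂(volume : Measure ℝ), t ∈ Bᶜ → σ'.rnDeriv volume t = 0 :=
      (ae_restrict_iff' hBm.compl).1 hg0
    have hgν' : ∀ᵐ t ∂ν', t ∈ Bᶜ → σ'.rnDeriv volume t = 0 := hgvol.filter_mono hac.ae_le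
    have hBν' : ∀ᵐ t ∂ν', t ∈ Bᶜ := by
      rw [ae_iff]
      have : {t : ℝ | ¬ t ∈ Bᶜ} = B := by ext t; simp
      rw [this]
      exact hB1
    filter_upwards [hgν', hBν'] with t ht1 ht2 using ht1 ht2
  -- the good property upstairs
  have hP : ∀ᵐ p ∂ν', ∃ ε > (0:ℝ),
      (∀ q ∈ Ioo p (p + ε), σ' (Icc p q) < ν' (Icc p q)) ∧
      (∀ q ∈ Ioo (p - ε) p, σ' (Icc q p) < ν' (Icc q p)) := by
    filter_upwards [D1, D2, h1, h2] with p hD1 hD2 h1p h2p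
    rw [h2p] at hD2
    obtain ⟨cc, hc0, hcf⟩ := exists_between h1p
    have E1 : ∀ᶠ a in v.filterAt p, σ' a / volume a < cc := (tendsto_order.1 hD2).2 cc hc0
    have E2 : ∀ᶠ a in v.filterAt p, cc < ν' a / volume a := (tendsto_order.1 hD1).1 cc hcf
    have E3 : ∀ᶠ a in v.filterAt p, a ⊆ Metric.closedBall p 1 :=
      v.eventually_filterAt_subset_closedBall p one_pos
    have E : ∀ᶠ a in v.filterAt p, σ' a < ν' a := by
      filter_upwards [E1, E2, E3] with s e1 e2 e3
      have hvt : volume s ≠ ⊤ :=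
        (lt_of_le_of_lt (measure_mono e3) measure_closedBall_lt_top).ne
      have hv0 : volume s ≠ 0 := by
        intro h0
        have hνs : ν' s = 0 := le_antisymm (by rw [← h0]; exact hν'le' s) (zero_le)
        rw [hνs, h0, ENNReal.zero_div] at e2
        exact absurd e2 (not_lt.2 (zero_le))
      have hlt1 : σ' s < cc * volume s := (ENNReal.div_lt_iff (Or.inl hv0) (Or.inl hvt)).1 e1
      have hlt2 : cc * volume s < ν' s :=
        (ENNReal.lt_div_iff_mul_lt (Or.inl hv0) (Or.inl hvt)).1 e2
      exact hlt1.trans hlt2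
    have R := (Real.tendsto_Icc_vitaliFamily_right p).eventually E
    have L := (Real.tendsto_Icc_vitaliFamily_left p).eventually E
    obtain ⟨u, hu, husub⟩ := mem_nhdsGT_iff_exists_Ioo_subset.1 R
    obtain ⟨l, hl, hlsub⟩ := mem_nhdsLT_iff_exists_Ioo_subset.1 L
    have hup : p < u := hu
    have hlp : l < p := hl
    refine ⟨min (u - p) (p - l), by simp [hup, hlp], ?_, ?_⟩
    · intro q hq
      have : q ∈ Ioo p u := ⟨hq.1, by
        have := hq.2
        have h9 : min (u - p) (p - l) ≤ u - p := min_le_left _ _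
        linarith⟩
      exact husub this
    · intro q hq
      have : q ∈ Ioo l p := ⟨by
        have := hq.1
        have h9 : min (u - p) (p - l) ≤ p - l := min_le_right _ _
        linarith, hq.2⟩
      exact hlsub this
  -- pull everything back
  have hTc : Set.Countable {x : ℝ | 0 < σ {x}} :=
    MeasureTheory.Measure.countable_meas_pos_of_disjoint_iUnion
      (μ := σ) (As := fun x : ℝ => ({x} : Set ℝ))
      (fun i => measurableSet_singleton i)
      (fun i j hij => by simp [Function.onFun, hij])
  have hT0 : ν {x : ℝ | 0 < σ {x}} = 0 := hTc.measure_zero ν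
  have hTae : ∀ᵐ x ∂ν, σ {x} = 0 := by
    rw [ae_iff]
    have he : {a : ℝ | ¬ σ {a} = 0} = {x : ℝ | 0 < σ {x}} := by
      ext a; simp [pos_iff_ne_zero]
    rw [he]; exact hT0
  have hPull : ∀ᵐ x ∂ν, ∃ ε > (0:ℝ),
      (∀ q ∈ Ioo (F x) (F x + ε), σ' (Icc (F x) q) < ν' (Icc (F x) q)) ∧
      (∀ q ∈ Ioo (F x - ε) (F x), σ' (Icc q (F x)) < ν' (Icc q (F x))) :=
    ae_of_ae_map hFmeas.aemeasurable hP
  filter_upwards [hTae, hPull] with x hxT hPx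
  obtain ⟨ε, hε, hPr, hPl⟩ := hPx
  have hσx : σ {x} = 0 := hxT
  have hmx : m {x} = 0 := by
    rw [hm, Measure.add_apply, measure_singleton, hσx, add_zero]
  -- one-sided continuity of F at x
  have hFr : Tendsto F (𝓝[>] x) (𝓝 (F x)) := by
    have h1 : Tendsto (fun t => (m (Iic t)).toReal) (𝓝[>] x) (𝓝 ((m (Iic x)).toReal)) :=
      cdf_tendsto_right m x
    have h2 : Tendsto (fun t : ℝ => t) (𝓝[>] x) (𝓝 x) := tendsto_id.mono_left nhdsWithin_le_nhds
    exact h2.add h1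
  have hFl : Tendsto F (𝓝[<] x) (𝓝 (F x)) := by
    have h1 : Tendsto (fun t => m (Ioc t x)) (𝓝[<] x) (𝓝 0) := tendsto_measure_Ioc_left m x hmx
    have h1' : Tendsto (fun t => (m (Ioc t x)).toReal) (𝓝[<] x) (𝓝 0) := by
      have := (ENNReal.tendsto_toReal (a := 0) (by simp)).comp h1
      simpa [Function.comp_def] using this
    have h2 : Tendsto (fun t : ℝ => t) (𝓝[<] x) (𝓝 x) := tendsto_id.mono_left nhdsWithin_le_nhds
    have h3 : Tendsto (fun t => F x + (t - x) - (m (Ioc t x)).toReal) (𝓝[<] x) (𝓝 (F x)) := by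
      have h4 : Tendsto (fun t : ℝ => F x + (t - x)) (𝓝[<] x) (𝓝 (F x + (x - x))) :=
        tendsto_const_nhds.add (h2.sub tendsto_const_nhds)
      have h5 := h4.sub h1'
      simpa using h5
    refine h3.congr' ?_
    filter_upwards [self_mem_nhdsWithin] with t ht
    have := hFd (le_of_lt ht)
    linarith
  have hRw : ∀ᶠ y in 𝓝[>] x, F y < F x + ε := (tendsto_order.1 hFr).2 _ (by linarith)
  have hLw : ∀ᶠ y in 𝓝[<] x, F x - ε < F y := (tendsto_order.1 hFl).1 _ (by linarith)
  obtain ⟨u, hu, husub⟩ := mem_nhdsGT_iff_exists_Ioo_subset.1 hRw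
  obtain ⟨l, hl, hlsub⟩ := mem_nhdsLT_iff_exists_Ioo_subset.1 hLw
  have hux : x < u := hu
  have hlx : l < x := hl
  refine ⟨min (u - x) (x - l), lt_min (by linarith) (by linarith), ?_, ?_⟩
  · intro y hy
    have hy1 : x < y := hy.1
    have hy2 : y < u := by
      have := hy.2
      have h9 : min (u - x) (x - l) ≤ u - x := min_le_left _ _
      linarith
    have hFy : F y ∈ Ioo (F x) (F x + ε) := ⟨hFmono hy1, husub ⟨hy1, hy2⟩⟩
    have hq := hPr (F y) hFy
    calc σ (Ioc x y) = σ' (Ioc (F x) (F y)) := (hσIoc x y).symm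
      _ ≤ σ' (Icc (F x) (F y)) := measure_mono Ioc_subset_Icc_self
      _ < ν' (Icc (F x) (F y)) := hq
      _ = ν' (Ioc (F x) (F y)) := (measure_congr (Ioc_ae_eq_Icc (μ := ν'))).symm
      _ = ν (Ioc x y) := hνIoc x y
  · intro y hy
    have hy2 : y < x := hy.2
    have hy1 : l < y := by
      have := hy.1
      have h9 : min (u - x) (x - l) ≤ x - l := min_le_right _ _
      linarith
    have hFy : F y ∈ Ioo (F x - ε) (F x) := ⟨hlsub ⟨hy1, hy2⟩, hFmono hy2⟩
    have hq := hPl (F y) hFy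
    calc σ (Ioc y x) = σ' (Ioc (F y) (F x)) := (hσIoc y x).symm
      _ ≤ σ' (Icc (F y) (F x)) := measure_mono Ioc_subset_Icc_self
      _ < ν' (Icc (F y) (F x)) := hq
      _ = ν' (Ioc (F y) (F x)) := (measure_congr (Ioc_ae_eq_Icc (μ := ν'))).symm
      _ = ν (Ioc y x) := hνIoc y x

/-- For a BV function `v` on `(a,b)` with distributional derivative (a finite signed
measure) `μ = μd + μj`, where `μd` is the diffuse (non-atomic) part and `μj` is the
atomic (jump) part, and with good (right-continuous) representative `v̄`:
for `D̃⁻v`-a.e. `xb ∈ (a,b)` there is `δ > 0` with `v̄ > v̄(xb)` on `(xb-δ,xb)` and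
`v̄ < v̄(xb)` on `(xb,xb+δ)`. -/
theorem stmt0 (a b : ℝ) (hab : a < b) (vbar : ℝ → ℝ)
    (μ μd μj : MeasureTheory.SignedMeasure ℝ)
    (hdecomp : μ = μd + μj)
    (hdiffuse : ∀ x : ℝ, μd {x} = 0)
    (hatomic : ∃ S : Set ℝ, S.Countable ∧
      ∀ t : Set ℝ, MeasurableSet t → t ∩ S = ∅ → μj t = 0)
    (hrep : ∀ x ∈ Set.Ioo a b, ∀ y ∈ Set.Ioo a b, x ≤ y →
      vbar y - vbar x = μ (Set.Ioc x y)) :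
    ∀ᵐ xb ∂(μd.toJordanDecomposition.negPart), xb ∈ Set.Ioo a b →
      ∃ δ > 0, (∀ x ∈ Set.Ioo (xb - δ) xb, vbar x > vbar xb) ∧
        (∀ x ∈ Set.Ioo xb (xb + δ), vbar x < vbar xb) := by
  classical
  obtain ⟨S, hScount, hSatom⟩ := hatomic
  have happly : ∀ (sm : SignedMeasure ℝ) (t : Set ℝ), MeasurableSet t →
      sm t = (sm.toJordanDecomposition.posPart t).toReal
        - (sm.toJordanDecomposition.negPart t).toReal := by
    intro sm t ht
    conv_lhs => rw [← sm.toSignedMeasure_toJordanDecomposition]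
    rw [JordanDecomposition.toSignedMeasure, Measure.toSignedMeasure_sub_apply ht]
    rfl
  set ν := μd.toJordanDecomposition.negPart with hνdef
  set π := μd.toJordanDecomposition.posPart with hπdef
  set tv := μj.totalVariation with htvdef
  haveI : IsFiniteMeasure tv := by
    rw [htvdef, SignedMeasure.totalVariation]
    infer_instance
  -- ν has no atoms
  haveI hνatoms : NullSingletonClass ν := by
    obtain ⟨u, hum, hu1, hu2⟩ := μd.toJordanDecomposition.mutuallySingular
    refine ⟨fun x => ?_⟩
    have hmeas : MeasurableSet ({x} ∩ u) := (measurableSet_singleton x).inter hum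
    have hμd : μd ({x} ∩ u) = 0 := by
      by_cases hxu : x ∈ u
      · have he : ({x} : Set ℝ) ∩ u = {x} :=
          inter_eq_self_of_subset_left (by simpa [singleton_subset_iff] using hxu)
        rw [he]
        exact hdiffuse x
      · have he : ({x} : Set ℝ) ∩ u = ∅ := by
          ext t
          simp only [mem_inter_iff, mem_singleton_iff, mem_empty_iff_false, iff_false, not_and]
          rintro rfl
          exact hxu
        rw [he]
        simp
    have hπ0 : π ({x} ∩ u) = 0 :=
      le_antisymm (le_trans (measure_mono inter_subset_right) hu1.le) (zero_le)
    have happ := happly μd _ hmeas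
    rw [hμd, ← hπdef, ← hνdef, hπ0] at happ
    have hν0 : ν ({x} ∩ u) = 0 := by
      have : (ν ({x} ∩ u)).toReal = 0 := by simpa using happ.symm
      exact (ENNReal.toReal_eq_zero_iff _).1 this |>.resolve_right (measure_ne_top _ _)
    have hsub : ({x} : Set ℝ) ⊆ ({x} ∩ u) ∪ uᶜ := by
      intro t ht
      by_cases htu : t ∈ u
      · exact Or.inl ⟨ht, htu⟩
      · exact Or.inr htu
    refine le_antisymm ?_ (zero_le)
    calc ν {x} ≤ ν (({x} ∩ u) ∪ uᶜ) := measure_mono hsub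
      _ ≤ ν ({x} ∩ u) + ν uᶜ := measure_union_le _ _
      _ = 0 := by rw [hν0, hu2, add_zero]
  -- total variation of μj vanishes off S
  have htv0 : ∀ t : Set ℝ, MeasurableSet t → t ∩ S = ∅ → tv t = 0 := by
    intro t ht hts
    obtain ⟨i, hi₁, hi₂, hi₃, hpos, hneg⟩ := μj.toJordanDecomposition_spec
    rw [htvdef, SignedMeasure.totalVariation, Measure.add_apply, hpos, hneg,
      SignedMeasure.toMeasureOfZeroLE_apply _ hi₂ hi₁ ht,
      SignedMeasure.toMeasureOfLEZero_apply _ hi₃ hi₁.compl ht]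
    have h1 : μj (i ∩ t) = 0 := by
      apply hSatom _ (hi₁.inter ht)
      apply eq_empty_of_subset_empty
      rw [← hts]
      exact inter_subset_inter_left _ inter_subset_right
    have h2 : μj (iᶜ ∩ t) = 0 := by
      apply hSatom _ (hi₁.compl.inter ht)
      apply eq_empty_of_subset_empty
      rw [← hts]
      exact inter_subset_inter_left _ inter_subset_right
    simp [h1, h2]
  -- σ and mutual singularity
  set σm : Measure ℝ := π + tv with hσm
  have hSm : MeasurableSet S := hScount.measurableSet
  have hsing : ν.MutuallySingular σm := by
    rw [hσm]
    refine Measure.MutuallySingular.add_right μd.toJordanDecomposition.mutuallySingular.symm ?_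
    exact ⟨S, hSm, hScount.measure_zero ν, htv0 Sᶜ hSm.compl (compl_inter_self S)⟩
  -- the key negativity estimate
  have hμlt : ∀ s t : ℝ, σm (Ioc s t) < ν (Ioc s t) → μ (Ioc s t) < 0 := by
    intro s t hst
    have hms : MeasurableSet (Ioc s t) := measurableSet_Ioc
    have h1 : μ (Ioc s t) = μd (Ioc s t) + μj (Ioc s t) := by
      rw [hdecomp, VectorMeasure.add_apply]
    have h2 := happly μd _ hms
    rw [← hπdef, ← hνdef] at h2
    have h3 : μj (Ioc s t) ≤ (tv (Ioc s t)).toReal := by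
      have h4 := happly μj _ hms
      have h5 : (μj.toJordanDecomposition.posPart (Ioc s t)).toReal ≤ (tv (Ioc s t)).toReal := by
        apply ENNReal.toReal_mono (measure_ne_top _ _)
        rw [htvdef, SignedMeasure.totalVariation, Measure.add_apply]
        exact le_self_add
      have h6 : (0:ℝ) ≤ (μj.toJordanDecomposition.negPart (Ioc s t)).toReal :=
        ENNReal.toReal_nonneg
      linarith
    have h4 : (σm (Ioc s t)).toReal < (ν (Ioc s t)).toReal :=
      ENNReal.toReal_strict_mono (measure_ne_top _ _) hst
    have h5 : (σm (Ioc s t)).toReal = (π (Ioc s t)).toReal + (tv (Ioc s t)).toReal := by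
      rw [hσm, Measure.add_apply, ENNReal.toReal_add (measure_ne_top _ _) (measure_ne_top _ _)]
    linarith
  -- conclude
  filter_upwards [main_aux ν σm hsing] with x hx hxab
  obtain ⟨δ₀, hδ₀, hR, hL⟩ := hx
  have hax : a < x := hxab.1
  have hxb : x < b := hxab.2
  refine ⟨min δ₀ (min (x - a) (b - x)),
    lt_min hδ₀ (lt_min (by linarith) (by linarith)), ?_, ?_⟩
  · intro z hz
    have hz2 : z < x := hz.2
    have hz1 : x - δ₀ < z := by
      have h6 := hz.1
      have h7 : min δ₀ (min (x - a) (b - x)) ≤ δ₀ := min_le_left _ _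
      linarith
    have hza : a < z := by
      have h6 := hz.1
      have h7 : min δ₀ (min (x - a) (b - x)) ≤ x - a :=
        le_trans (min_le_right _ _) (min_le_left _ _)
      linarith
    have hzI : z ∈ Ioo a b := ⟨hza, by linarith⟩
    have hdiff := hrep z hzI x hxab hz2.le
    have hneg := hμlt z x (hL z ⟨hz1, hz2⟩)
    show vbar z > vbar x
    linarith
  · intro z hz
    have hz1 : x < z := hz.1
    have hz2 : z < x + δ₀ := by
      have h6 := hz.2
      have h7 : min δ₀ (min (x - a) (b - x)) ≤ δ₀ := min_le_left _ _
      linarith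
    have hzb : z < b := by
      have h6 := hz.2
      have h7 : min δ₀ (min (x - a) (b - x)) ≤ b - x :=
        le_trans (min_le_right _ _) (min_le_right _ _)
      linarith
    have hzI : z ∈ Ioo a b := ⟨by linarith, hzb⟩
    have hdiff := hrep x hxab z hzI hz1.le
    have hneg := hμlt x z (hR z ⟨hz1, hz2⟩)
    show vbar z < vbar x
    linarith
end

section
/- Let u ∈ L^∞([0,T] × ℝ) and let γ̄ : (t⁻, t⁺) → ℝ be a Lipschitz curve such that for Lebesgue-a.e. t ∈ (t⁻, t⁺) the point (t, γ̄(t)) is a Lebesgue point of u. Then lim_{δ→0} ∫_{t⁻}^{t⁺} (1/δ) ∫_{γ̄(t)}^{γ̄(t)+δ} |u(t,x) − u(t, γ̄(t))| dx dt = 0, i.e. u admits its pointwise values as a one-sided (right) strong trace along the curve. -/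
open MeasureTheory Set Filter
open scoped ENNReal

/-- Euclidean ball in ℝ² (realized as ℝ × ℝ). -/
def Eball (p : ℝ × ℝ) (r : ℝ) : Set (ℝ × ℝ) :=
  {z : ℝ × ℝ | (z.1 - p.1) ^ 2 + (z.2 - p.2) ^ 2 < r ^ 2}

lemma Eball_measurableSet (p : ℝ × ℝ) (r : ℝ) : MeasurableSet (Eball p r) := by
  have h : IsOpen (Eball p r) := by
    have hc : Continuous fun z : ℝ × ℝ => (z.1 - p.1)^2 + (z.2 - p.2)^2 := by continuity
    exact isOpen_lt hc continuous_const
  exact h.measurableSet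

lemma Eball_preimage (p : ℝ × ℝ) (r : ℝ) (hr : 0 < r) :
    Complex.measurableEquivRealProd ⁻¹' Eball p r
      = Metric.ball ({ re := p.1, im := p.2 } : ℂ) r := by
  ext z
  simp only [Set.mem_preimage, Eball, Set.mem_setOf_eq, Complex.measurableEquivRealProd_apply,
    Metric.mem_ball, Complex.dist_eq, Complex.norm_def]
  rw [Real.sqrt_lt' hr, Complex.normSq_apply]
  simp [Complex.sub_re, Complex.sub_im]
  ring_nf

lemma volume_Eball (p : ℝ × ℝ) (r : ℝ) (hr : 0 < r) :
    volume (Eball p r) = ENNReal.ofReal r ^ 2 * NNReal.pi := by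
  rw [← Complex.volume_preserving_equiv_real_prod.measure_preimage
    (Eball_measurableSet p r).nullMeasurableSet, Eball_preimage p r hr, Complex.volume_ball]

lemma volume_Eball_toReal (p : ℝ × ℝ) (r : ℝ) (hr : 0 < r) :
    (volume (Eball p r)).toReal = Real.pi * r ^ 2 := by
  rw [volume_Eball p r hr, ENNReal.toReal_mul, ENNReal.toReal_pow, ENNReal.toReal_ofReal hr.le,
    ENNReal.coe_toReal, NNReal.coe_real_pi]
  ring

lemma Eball_mono (p : ℝ × ℝ) {r r' : ℝ} (h0 : 0 ≤ r) (h : r ≤ r') : Eball p r ⊆ Eball p r' := by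
  intro z hz
  simp only [Eball, Set.mem_setOf_eq] at *
  nlinarith

lemma Eball_subset {p q : ℝ × ℝ} {r : ℝ} (hr : 0 < r)
    (hpq : (p.1 - q.1)^2 + (p.2 - q.2)^2 ≤ (r/2)^2) : Eball p (r/2) ⊆ Eball q r := by
  intro z hz
  simp only [Eball, Set.mem_setOf_eq] at *
  nlinarith [sq_nonneg ((z.1 - p.1) * (p.2 - q.2) - (z.2 - p.2) * (p.1 - q.1)),
    sq_nonneg ((z.1 - p.1) * (p.1 - q.1) + (z.2 - p.2) * (p.2 - q.2) + (r/2)^2),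
    sq_nonneg ((z.1 - p.1) * (p.1 - q.1) + (z.2 - p.2) * (p.2 - q.2) - (r/2)^2)]


/-- normalized averages of `|u - u(t,γ t)|` on Euclidean balls centered on the curve -/
noncomputable def Lavg (u : ℝ × ℝ → ℝ) (γ : ℝ → ℝ) (r t : ℝ) : ℝ :=
  (volume (Eball (t, γ t) r)).toReal⁻¹ * ∫ z in Eball (t, γ t) r, |u z - u (t, γ t)|


section Aux
variable {u : ℝ × ℝ → ℝ} {C : ℝ}

lemma integrableOn_abs_sub (hu : Measurable u) (hbd : ∀ p, |u p| ≤ C) (c : ℝ)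
    (S : Set (ℝ × ℝ)) (hS : volume S ≠ ⊤) :
    IntegrableOn (fun z => |u z - c|) S volume := by
  apply Measure.integrableOn_of_bounded hS
  · exact ((hu.sub measurable_const).abs).aestronglyMeasurable
  · filter_upwards with z
    rw [Real.norm_eq_abs, abs_abs]
    calc |u z - c| ≤ |u z| + |c| := abs_sub _ _
    _ ≤ C + |c| := by linarith [hbd z]

lemma integrableOn_abs_sub_line (hu : Measurable u) (hbd : ∀ p, |u p| ≤ C) (c t a b : ℝ) :
    IntegrableOn (fun x => |u (t, x) - c|) (Ioo a b) volume := by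
  apply Measure.integrableOn_of_bounded (by simp)
  · exact (((hu.comp (measurable_const.prodMk measurable_id)).sub measurable_const).abs).aestronglyMeasurable
  · filter_upwards with x
    rw [Real.norm_eq_abs, abs_abs]
    calc |u (t,x) - c| ≤ |u (t,x)| + |c| := abs_sub _ _
    _ ≤ C + |c| := by linarith [hbd (t,x)]


lemma volume_Eball_ne_top (p : ℝ × ℝ) (r : ℝ) (hr : 0 < r) : volume (Eball p r) ≠ ⊤ := by
  rw [volume_Eball p r hr]
  exact ENNReal.mul_ne_top (ENNReal.pow_ne_top ENNReal.ofReal_ne_top) ENNReal.coe_ne_top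

/-- scaling comparison of normalized averages -/
lemma a_scale (hu : Measurable u) (hbd : ∀ p, |u p| ≤ C) (p : ℝ × ℝ) {r r' : ℝ}
    (h0 : 0 < r) (h1 : r ≤ r') (h2 : r' ≤ 2 * r) :
    (volume (Eball p r)).toReal⁻¹ * ∫ z in Eball p r, |u z - u p|
      ≤ 4 * ((volume (Eball p r')).toReal⁻¹ * ∫ z in Eball p r', |u z - u p|) := by
  have h0' : 0 < r' := lt_of_lt_of_le h0 h1
  have hint : ∫ z in Eball p r, |u z - u p| ≤ ∫ z in Eball p r', |u z - u p| := by
    apply setIntegral_mono_set (integrableOn_abs_sub hu hbd _ _ (volume_Eball_ne_top p r' h0'))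
    · filter_upwards with z using abs_nonneg _
    · exact HasSubset.Subset.eventuallyLE (Eball_mono p h0.le h1)
  have hnn : 0 ≤ ∫ z in Eball p r', |u z - u p| :=
    setIntegral_nonneg (Eball_measurableSet p r') (fun z _ => abs_nonneg _)
  rw [volume_Eball_toReal p r h0, volume_Eball_toReal p r' h0']
  have hπ := Real.pi_pos
  have e1 : (Real.pi * r ^ 2)⁻¹ ≤ 4 * (Real.pi * r' ^ 2)⁻¹ := by
    rw [inv_eq_one_div, inv_eq_one_div, mul_one_div, div_le_div_iff₀ (by positivity) (by positivity)]
    have h4 : r' ^ 2 ≤ 4 * r ^ 2 := by nlinarith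
    nlinarith
  calc (Real.pi * r ^ 2)⁻¹ * ∫ z in Eball p r, |u z - u p|
      ≤ (Real.pi * r ^ 2)⁻¹ * ∫ z in Eball p r', |u z - u p| := by
        apply mul_le_mul_of_nonneg_left hint (by positivity)
    _ ≤ (4 * (Real.pi * r' ^ 2)⁻¹) * ∫ z in Eball p r', |u z - u p| :=
        mul_le_mul_of_nonneg_right e1 hnn
    _ = 4 * ((Real.pi * r' ^ 2)⁻¹ * ∫ z in Eball p r', |u z - u p|) := by ring

/-- comparison of values at two nearby Lebesgue-type points -/
lemma trace_cmp (hu : Measurable u) (hbd : ∀ p, |u p| ≤ C) {p q : ℝ × ℝ} {r : ℝ} (hr : 0 < r)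
    (hd : (p.1 - q.1)^2 + (p.2 - q.2)^2 ≤ (r/2)^2) :
    |u p - u q| ≤ 4 * ((volume (Eball p r)).toReal⁻¹ * ∫ z in Eball p r, |u z - u p|)
      + 4 * ((volume (Eball q r)).toReal⁻¹ * ∫ z in Eball q r, |u z - u q|) := by
  have hr2 : 0 < r / 2 := by linarith
  set O := Eball p (r/2) with hO
  have hOp : O ⊆ Eball p r := Eball_mono p hr2.le (by linarith)
  have hOq : O ⊆ Eball q r := Eball_subset hr hd
  have hintp : IntegrableOn (fun z => |u z - u p|) (Eball p r) volume :=
    integrableOn_abs_sub hu hbd _ _ (volume_Eball_ne_top p r hr)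
  have hintq : IntegrableOn (fun z => |u z - u q|) (Eball q r) volume :=
    integrableOn_abs_sub hu hbd _ _ (volume_Eball_ne_top q r hr)
  have h1 : ∫ z in O, |u p - u q| ≤ (∫ z in O, |u z - u p|) + ∫ z in O, |u z - u q| := by
    rw [← integral_add (hintp.mono_set hOp) (hintq.mono_set hOq)]
    apply setIntegral_mono_on
      (integrableOn_const (volume_Eball_ne_top p (r/2) hr2))
      ((hintp.mono_set hOp).add (hintq.mono_set hOq)) (Eball_measurableSet p (r/2))
    intro z _
    calc |u p - u q| ≤ |u p - u z| + |u z - u q| := abs_sub_le _ _ _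
    _ = |u z - u p| + |u z - u q| := by rw [abs_sub_comm]
  have h2 : ∫ z in O, |u z - u p| ≤ ∫ z in Eball p r, |u z - u p| :=
    setIntegral_mono_set hintp (.of_forall fun z => abs_nonneg _)
      (HasSubset.Subset.eventuallyLE hOp)
  have h3 : ∫ z in O, |u z - u q| ≤ ∫ z in Eball q r, |u z - u q| :=
    setIntegral_mono_set hintq (.of_forall fun z => abs_nonneg _)
      (HasSubset.Subset.eventuallyLE hOq)
  have h4 : ∫ _z in O, (|u p - u q| : ℝ) = (Real.pi * (r/2)^2) * |u p - u q| := by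
    rw [setIntegral_const, smul_eq_mul, measureReal_def, volume_Eball_toReal p _ hr2]
  set Ap := ∫ z in Eball p r, |u z - u p| with hAp
  set Aq := ∫ z in Eball q r, |u z - u q| with hAq
  have hApnn : 0 ≤ Ap :=
    setIntegral_nonneg (Eball_measurableSet p r) (fun z _ => abs_nonneg _)
  have hAqnn : 0 ≤ Aq :=
    setIntegral_nonneg (Eball_measurableSet q r) (fun z _ => abs_nonneg _)
  have key : (Real.pi * (r/2)^2) * |u p - u q| ≤ Ap + Aq := by
    rw [← h4]; linarith [h1, h2, h3]
  rw [volume_Eball_toReal p r hr, volume_Eball_toReal q r hr]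
  have hπ := Real.pi_pos
  have step : |u p - u q| ≤ (Ap + Aq) / (Real.pi * (r/2)^2) := by
    rw [le_div_iff₀ (by positivity)]
    nlinarith [key]
  calc |u p - u q| ≤ (Ap + Aq) / (Real.pi * (r/2)^2) := step
  _ = 4 * ((Real.pi * r^2)⁻¹ * Ap) + 4 * ((Real.pi * r^2)⁻¹ * Aq) := by
      field_simp
      ring

/-- measurability of the parametric line integral -/
lemma meas_param_line (hu : Measurable u) {w c : ℝ → ℝ} (hw : Measurable w)
    (hc : Measurable c) (δ : ℝ) :
    StronglyMeasurable (fun t => ∫ x in Ioo (w t) (w t + δ), |u (t, x) - c t|) := by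
  have hS : MeasurableSet {p : ℝ × ℝ | w p.1 < p.2 ∧ p.2 < w p.1 + δ} := by
    apply MeasurableSet.inter
    · exact measurableSet_lt (hw.comp measurable_fst) measurable_snd
    · exact measurableSet_lt measurable_snd ((hw.comp measurable_fst).add measurable_const)
  have hF : Measurable ({p : ℝ × ℝ | w p.1 < p.2 ∧ p.2 < w p.1 + δ}.indicator
      (fun p : ℝ × ℝ => |u p - c p.1|)) := by
    apply Measurable.indicator _ hS
    exact (hu.sub (hc.comp measurable_fst)).abs
  have heq : (fun t => ∫ x in Ioo (w t) (w t + δ), |u (t, x) - c t|)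
      = fun t => ∫ x, ({p : ℝ × ℝ | w p.1 < p.2 ∧ p.2 < w p.1 + δ}.indicator
          (fun p : ℝ × ℝ => |u p - c p.1|)) (t, x) := by
    funext t
    rw [← integral_indicator measurableSet_Ioo]
    congr 1
  rw [heq]
  exact (hF.stronglyMeasurable).integral_prod_right'

/-- measurability of the parametric ball average integral -/
lemma meas_param_ball (hu : Measurable u) {w : ℝ → ℝ} (hw : Measurable w) (r : ℝ) :
    StronglyMeasurable (fun t => ∫ z in Eball (t, w t) r, |u z - u (t, w t)|) := by
  have hS : MeasurableSet {q : ℝ × (ℝ × ℝ) | (q.2.1 - q.1)^2 + (q.2.2 - w q.1)^2 < r^2} := by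
    apply measurableSet_lt _ measurable_const
    apply Measurable.add
    · exact ((measurable_fst.comp measurable_snd).sub measurable_fst).pow_const 2
    · exact ((measurable_snd.comp measurable_snd).sub (hw.comp measurable_fst)).pow_const 2
  have hF : Measurable ({q : ℝ × (ℝ × ℝ) | (q.2.1 - q.1)^2 + (q.2.2 - w q.1)^2 < r^2}.indicator
      (fun q : ℝ × (ℝ × ℝ) => |u q.2 - u (q.1, w q.1)|)) := by
    apply Measurable.indicator _ hS
    apply Measurable.abs
    apply Measurable.sub
    · exact hu.comp measurable_snd
    · exact hu.comp ((measurable_fst).prodMk (hw.comp measurable_fst))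
  have heq : (fun t => ∫ z in Eball (t, w t) r, |u z - u (t, w t)|)
      = fun t => ∫ z, ({q : ℝ × (ℝ × ℝ) | (q.2.1 - q.1)^2 + (q.2.2 - w q.1)^2 < r^2}.indicator
          (fun q : ℝ × (ℝ × ℝ) => |u q.2 - u (q.1, w q.1)|)) (t, z) := by
    funext t
    rw [← integral_indicator (Eball_measurableSet _ r)]
    congr 1
  rw [heq]
  exact (hF.stronglyMeasurable).integral_prod_right'


lemma Lavg_nonneg (γ : ℝ → ℝ) (r t : ℝ) : 0 ≤ Lavg u γ r t := by
  apply mul_nonneg (by positivity)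
  exact setIntegral_nonneg (Eball_measurableSet _ r) (fun z _ => abs_nonneg _)

lemma Lavg_scale (hu : Measurable u) (hbd : ∀ p, |u p| ≤ C) (γ : ℝ → ℝ) {r r' : ℝ} (t : ℝ)
    (h0 : 0 < r) (h1 : r ≤ r') (h2 : r' ≤ 2 * r) :
    Lavg u γ r t ≤ 4 * Lavg u γ r' t :=
  a_scale hu hbd _ h0 h1 h2

lemma Lavg_stronglyMeasurable (hu : Measurable u) {γ : ℝ → ℝ} (hw : Measurable γ) {r : ℝ}
    (hr : 0 < r) : StronglyMeasurable (Lavg u γ r) := by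
  have heq : Lavg u γ r = fun t =>
      (Real.pi * r ^ 2)⁻¹ * ∫ z in Eball (t, γ t) r, |u z - u (t, γ t)| := by
    funext t
    rw [Lavg, volume_Eball_toReal _ r hr]
  rw [heq]
  exact (meas_param_ball hu hw r).const_mul _

/-- Egorov step: uniform smallness of ball averages off a small bad set. -/
lemma egorov_step (hu : Measurable u) (hbd : ∀ p, |u p| ≤ C)
    {γ : ℝ → ℝ} (hw : Measurable γ) {tm tp : ℝ}
    (hleb : ∀ᵐ t : ℝ, t ∈ Set.Ioo tm tp →
      Tendsto (fun r : ℝ => Lavg u γ r t) (nhdsWithin 0 (Set.Ioi 0)) (nhds 0))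
    {ε : ℝ} (hε : 0 < ε) :
    ∃ E, E ⊆ Set.Ioo tm tp ∧ MeasurableSet E ∧
      volume (Set.Ioo tm tp \ E) ≤ ENNReal.ofReal ε ∧
      ∃ ρ : ℝ, 0 < ρ ∧ ρ ≤ 1 ∧ ∀ t ∈ E, ∀ r : ℝ, 0 < r → r ≤ ρ → Lavg u γ r t ≤ ε := by
  set f : ℕ → ℝ → ℝ := fun n t => Lavg u γ ((1/2 : ℝ)^n) t with hf
  have hfm : ∀ n, StronglyMeasurable (f n) :=
    fun n => Lavg_stronglyMeasurable hu hw (by positivity)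
  have hseq : Tendsto (fun n : ℕ => ((1:ℝ)/2)^n) atTop (nhdsWithin 0 (Set.Ioi 0)) := by
    rw [tendsto_nhdsWithin_iff]
    constructor
    · exact tendsto_pow_atTop_nhds_zero_of_lt_one (by norm_num) (by norm_num)
    · exact .of_forall fun n => pow_pos (by norm_num : (0:ℝ) < 1/2) n
  have hae : ∀ᵐ t : ℝ, t ∈ Set.Ioo tm tp →
      Tendsto (fun n => f n t) atTop (nhds ((fun _ => (0:ℝ)) t)) := by
    filter_upwards [hleb] with t ht hti
    exact (ht hti).comp hseq
  obtain ⟨bad, hbadsub, hbadm, hbadvol, hunif⟩ :=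
    tendstoUniformlyOn_of_ae_tendsto hfm stronglyMeasurable_const measurableSet_Ioo
      (by rw [Real.volume_Ioo]; exact ENNReal.ofReal_ne_top) hae hε
  refine ⟨Set.Ioo tm tp \ bad, Set.diff_subset, measurableSet_Ioo.diff hbadm, ?_, ?_⟩
  · have : Set.Ioo tm tp \ (Set.Ioo tm tp \ bad) ⊆ bad := by
      intro x hx
      simp only [Set.mem_diff, not_and, not_not] at hx
      exact hx.2 hx.1
    exact le_trans (measure_mono this) hbadvol
  · rw [Metric.tendstoUniformlyOn_iff] at hunif
    obtain ⟨n₀, hn₀⟩ := eventually_atTop.1 (hunif (ε/4) (by positivity))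
    refine ⟨min 1 ((1/2 : ℝ)^n₀), by positivity, min_le_left _ _, ?_⟩
    intro t ht r hr hrρ
    have hrρ' : r ≤ (1/2 : ℝ)^n₀ := le_trans hrρ (min_le_right _ _)
    -- find the dyadic scale just above r
    have hex : ∃ m : ℕ, ((1:ℝ)/2)^m < r := exists_pow_lt_of_lt_one hr (by norm_num)
    have hk : ((1:ℝ)/2)^(Nat.find hex) < r := Nat.find_spec hex
    have hkgt : n₀ < Nat.find hex := by
      by_contra hle
      push_neg at hle
      have : ((1:ℝ)/2)^n₀ ≤ ((1:ℝ)/2)^(Nat.find hex) :=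
        pow_le_pow_of_le_one (by norm_num) (by norm_num) hle
      linarith
    obtain ⟨j, hkj⟩ : ∃ j, Nat.find hex = j + 1 := ⟨Nat.find hex - 1, by omega⟩
    rw [hkj] at hk
    have hj1 : r ≤ ((1:ℝ)/2)^j := by
      by_contra hlt
      push_neg at hlt
      exact Nat.find_min hex (by omega) hlt
    have hj2 : ((1:ℝ)/2)^j ≤ 2 * r := by
      have : ((1:ℝ)/2)^(j+1) = (1/2) * (1/2)^j := by ring
      rw [this] at hk
      linarith
    have hjn₀ : n₀ ≤ j := by omega
    have hsmall := hn₀ j hjn₀ t ht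
    rw [Real.dist_eq, abs_sub_comm, sub_zero, abs_of_nonneg (Lavg_nonneg γ _ t)] at hsmall
    calc Lavg u γ r t ≤ 4 * Lavg u γ ((1/2 : ℝ)^j) t :=
        Lavg_scale hu hbd γ t hr hj1 hj2
    _ ≤ 4 * (ε/4) := by linarith
    _ = ε := by ring


lemma cell_bound (hu : Measurable u) (hbd : ∀ p, |u p| ≤ C) {γ : ℝ → ℝ} (hw : Measurable γ)
    {A : Set ℝ} (hA : MeasurableSet A) {pj : ℝ × ℝ} {δ r : ℝ} (hδ : 0 < δ) (hr : 0 < r)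
    (hsub : ∀ t ∈ A, ∀ x ∈ Set.Ioo (γ t) (γ t + δ), (t, x) ∈ Eball pj r) :
    (∫ t in A, ∫ x in Set.Ioo (γ t) (γ t + δ), |u (t, x) - u pj|)
      ≤ ∫ z in Eball pj r, |u z - u pj| := by
  set F : ℝ × ℝ → ℝ≥0∞ := fun z => ENNReal.ofReal |u z - u pj| with hF
  have hFm : Measurable F := ENNReal.measurable_ofReal.comp ((hu.sub measurable_const).abs)
  set G : ℝ → ℝ := fun t => ∫ x in Set.Ioo (γ t) (γ t + δ), |u (t, x) - u pj| with hG
  have hGm : StronglyMeasurable G := meas_param_line hu hw measurable_const δ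
  have hGnn : ∀ t, 0 ≤ G t := fun t =>
    setIntegral_nonneg measurableSet_Ioo fun x _ => abs_nonneg _
  have hFindm : Measurable ((Eball pj r).indicator F) :=
    hFm.indicator (Eball_measurableSet pj r)
  have step1 : ∫ t in A, G t = (∫⁻ t in A, ENNReal.ofReal (G t)).toReal := by
    rw [integral_eq_lintegral_of_nonneg_ae (.of_forall hGnn)
      (hGm.aestronglyMeasurable.restrict)]
  have step2 : ∀ t, ENNReal.ofReal (G t) = ∫⁻ x in Set.Ioo (γ t) (γ t + δ), F (t, x) := by
    intro t
    rw [hG]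
    rw [MeasureTheory.ofReal_integral_eq_lintegral_ofReal
      (integrableOn_abs_sub_line hu hbd _ t _ _) (.of_forall fun x => abs_nonneg _)]
  have hfin : (∫⁻ z in Eball pj r, F z) ≠ ⊤ := by
    have hle : ∫⁻ z in Eball pj r, F z ≤ ENNReal.ofReal (C + |u pj|) * volume (Eball pj r) := by
      rw [← setLIntegral_const]
      apply setLIntegral_mono measurable_const
      intro z _
      apply ENNReal.ofReal_le_ofReal
      calc |u z - u pj| ≤ |u z| + |u pj| := abs_sub _ _
      _ ≤ C + |u pj| := by linarith [hbd z]
    exact ne_top_of_le_ne_top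
      (ENNReal.mul_ne_top ENNReal.ofReal_ne_top (volume_Eball_ne_top pj r hr)) hle
  have step3 : (∫⁻ t in A, ∫⁻ x in Set.Ioo (γ t) (γ t + δ), F (t, x))
      ≤ ∫⁻ z in Eball pj r, F z := by
    have h1 : ∀ t ∈ A, (∫⁻ x in Set.Ioo (γ t) (γ t + δ), F (t, x))
        ≤ ∫⁻ x, (Eball pj r).indicator F (t, x) := by
      intro t ht
      rw [← lintegral_indicator measurableSet_Ioo]
      apply lintegral_mono
      intro x
      show (Set.Ioo (γ t) (γ t + δ)).indicator (fun x => F (t, x)) x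
        ≤ (Eball pj r).indicator F (t, x)
      by_cases hx : x ∈ Set.Ioo (γ t) (γ t + δ)
      · rw [Set.indicator_of_mem hx, Set.indicator_of_mem (hsub t ht x hx)]
      · rw [Set.indicator_of_notMem hx]; exact zero_le
    have h2 : Measurable fun t => ∫⁻ x, (Eball pj r).indicator F (t, x) :=
      Measurable.lintegral_prod_right hFindm
    calc (∫⁻ t in A, ∫⁻ x in Set.Ioo (γ t) (γ t + δ), F (t, x))
        ≤ ∫⁻ t in A, ∫⁻ x, (Eball pj r).indicator F (t, x) := setLIntegral_mono h2 h1
      _ ≤ ∫⁻ t, ∫⁻ x, (Eball pj r).indicator F (t, x) := setLIntegral_le_lintegral _ _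
      _ = ∫⁻ z, (Eball pj r).indicator F z := by
          rw [Measure.volume_eq_prod, MeasureTheory.lintegral_prod _ hFindm.aemeasurable]
      _ = ∫⁻ z in Eball pj r, F z := lintegral_indicator (Eball_measurableSet pj r) F
  have step4 : (∫⁻ z in Eball pj r, F z).toReal = ∫ z in Eball pj r, |u z - u pj| := by
    rw [integral_eq_lintegral_of_nonneg_ae (f := fun z => |u z - u pj|) (.of_forall fun z => abs_nonneg _)
      (((hu.sub measurable_const).abs).aestronglyMeasurable.restrict)]
  calc ∫ t in A, G t = (∫⁻ t in A, ENNReal.ofReal (G t)).toReal := step1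
    _ = (∫⁻ t in A, ∫⁻ x in Set.Ioo (γ t) (γ t + δ), F (t, x)).toReal := by
        congr 1
        exact lintegral_congr fun t => step2 t
    _ ≤ (∫⁻ z in Eball pj r, F z).toReal := ENNReal.toReal_mono hfin step3
    _ = ∫ z in Eball pj r, |u z - u pj| := step4


end Aux

set_option maxHeartbeats 2000000 in
/-- If `u ∈ L^∞([0,T] × ℝ)` and `γ̄ : (t⁻,t⁺) → ℝ` is Lipschitz with `(t, γ̄(t))` a
Lebesgue point of `u` for a.e. `t`, then `u` admits its pointwise values as one-sided
(right) strong trace along the curve. -/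
theorem stmt1 (T C : ℝ) (hT : 0 ≤ T) (u : ℝ × ℝ → ℝ)
    (hmeas : Measurable u) (hbd : ∀ p, |u p| ≤ C)
    (tm tp : ℝ) (htm : tm < tp) (hsub : Set.Ioo tm tp ⊆ Set.Icc 0 T)
    (L : NNReal) (γ : ℝ → ℝ) (hγ : LipschitzOnWith L γ (Set.Ioo tm tp))
    (hleb : ∀ᵐ t : ℝ, t ∈ Set.Ioo tm tp →
      Filter.Tendsto
        (fun r : ℝ => (volume (Eball (t, γ t) r)).toReal⁻¹ *
          ∫ z in Eball (t, γ t) r, |u z - u (t, γ t)|)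
        (nhdsWithin 0 (Set.Ioi 0)) (nhds 0)) :
    Filter.Tendsto
      (fun δ : ℝ => ∫ t in Set.Ioo tm tp,
        (1 / δ) * ∫ x in Set.Ioo (γ t) (γ t + δ), |u (t, x) - u (t, γ t)|)
      (nhdsWithin 0 (Set.Ioi 0)) (nhds 0) := by
  obtain ⟨γ', hγ'L, hγeq⟩ := hγ.extend_real
  have hγ'm : Measurable γ' := hγ'L.continuous.measurable
  have hC0 : 0 ≤ C := le_trans (abs_nonneg _) (hbd (0, 0))
  have hL0 : (0:ℝ) ≤ (L : ℝ) := L.coe_nonneg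
  set K : ℝ := 2 + 2 * (L : ℝ) with hK
  have hK0 : 0 < K := by positivity
  -- rewrite in terms of the globally Lipschitz extension γ'
  have hgoal_eq : ∀ δ : ℝ, (∫ t in Set.Ioo tm tp,
        (1 / δ) * ∫ x in Set.Ioo (γ t) (γ t + δ), |u (t, x) - u (t, γ t)|)
      = ∫ t in Set.Ioo tm tp,
        (1 / δ) * ∫ x in Set.Ioo (γ' t) (γ' t + δ), |u (t, x) - u (t, γ' t)| := by
    intro δ
    apply setIntegral_congr_fun measurableSet_Ioo
    intro t ht
    dsimp only
    rw [hγeq ht]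
  have hleb' : ∀ᵐ t : ℝ, t ∈ Set.Ioo tm tp →
      Tendsto (fun r : ℝ => Lavg u γ' r t) (nhdsWithin 0 (Set.Ioi 0)) (nhds 0) := by
    filter_upwards [hleb] with t ht hti
    have h := ht hti
    unfold Lavg
    rwa [hγeq hti] at h
  -- the measurable, uniformly bounded family of time-slice averages
  have hgm : ∀ δ : ℝ, StronglyMeasurable (fun t =>
      (1/δ) * ∫ x in Set.Ioo (γ' t) (γ' t + δ), |u (t, x) - u (t, γ' t)|) := by
    intro δ
    exact (meas_param_line hmeas hγ'm
      (hmeas.comp (measurable_id.prodMk hγ'm)) δ).const_mul _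
  have hline_bd : ∀ (t c a : ℝ) (δ : ℝ), 0 < δ → |c| ≤ C →
      ∫ x in Set.Ioo a (a + δ), |u (t, x) - c| ≤ 2*C*δ := by
    intro t c a δ hδ hc
    calc ∫ x in Set.Ioo a (a + δ), |u (t, x) - c|
        ≤ ∫ _x in Set.Ioo a (a + δ), 2*C := by
          apply setIntegral_mono_on (integrableOn_abs_sub_line hmeas hbd c t a (a+δ))
            (integrableOn_const (by rw [Real.volume_Ioo]; exact ENNReal.ofReal_ne_top))
            measurableSet_Ioo
          intro x _
          calc |u (t,x) - c| ≤ |u (t,x)| + |c| := abs_sub _ _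
          _ ≤ 2*C := by linarith [hbd (t,x)]
      _ = (volume (Set.Ioo a (a+δ))).toReal * (2*C) := by rw [setIntegral_const]; rfl
      _ = 2*C*δ := by
          rw [Real.volume_Ioo, ENNReal.toReal_ofReal (by linarith)]
          ring
  have hgnn : ∀ (δ : ℝ), 0 < δ → ∀ t, 0 ≤ (1/δ) * ∫ x in Set.Ioo (γ' t) (γ' t + δ), |u (t, x) - u (t, γ' t)| := by
    intro δ hδ t
    apply mul_nonneg (by positivity)
    exact setIntegral_nonneg measurableSet_Ioo fun x _ => abs_nonneg _
  have hgbd : ∀ (δ : ℝ), 0 < δ → ∀ t,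
      (1/δ) * (∫ x in Set.Ioo (γ' t) (γ' t + δ), |u (t, x) - u (t, γ' t)|) ≤ 2*C := by
    intro δ hδ t
    have h := hline_bd t (u (t, γ' t)) (γ' t) δ hδ (hbd _)
    rw [div_mul_eq_mul_div, one_mul, div_le_iff₀ hδ]
    linarith
  have hgint : ∀ (δ : ℝ), 0 < δ → ∀ S : Set ℝ, S ⊆ Set.Ioo tm tp →
      IntegrableOn (fun t => (1/δ) * ∫ x in Set.Ioo (γ' t) (γ' t + δ), |u (t, x) - u (t, γ' t)|)
        S volume := by
    intro δ hδ S hS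
    apply Measure.integrableOn_of_bounded (M := 2*C)
    · exact ne_top_of_le_ne_top (by rw [Real.volume_Ioo]; exact ENNReal.ofReal_ne_top)
        (measure_mono hS)
    · exact (hgm δ).aestronglyMeasurable
    · filter_upwards with t
      rw [Real.norm_eq_abs, abs_of_nonneg (hgnn δ hδ t)]
      exact hgbd δ hδ t
  -- the main quantitative estimate
  set M : ℝ := 2*C + Real.pi*K^2*(tp - tm + 1) + 8*(tp - tm) with hM
  have hπ := Real.pi_pos
  have htm' : (0:ℝ) ≤ tp - tm := by linarith
  have hM0 : 0 ≤ M := by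
    rw [hM]
    have h1 : (0:ℝ) ≤ Real.pi*K^2*(tp - tm + 1) := by positivity
    have h2 : (0:ℝ) ≤ 8*(tp - tm) := by linarith
    linarith
  have main : ∀ ε : ℝ, 0 < ε → ∃ δ₁ : ℝ, 0 < δ₁ ∧ ∀ δ : ℝ, 0 < δ → δ < δ₁ →
      (∫ t in Set.Ioo tm tp, (1/δ) * ∫ x in Set.Ioo (γ' t) (γ' t + δ), |u (t,x) - u (t,γ' t)|)
        ≤ M * ε := by
    intro ε hε
    obtain ⟨E, hEsub, hEm, hEvol, ρ, hρ0, hρ1, hEunif⟩ := egorov_step hmeas hbd hγ'm hleb' hε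
    refine ⟨min 1 (ρ / K), by positivity, ?_⟩
    intro δ hδ0 hδ1
    have hδ1' : δ < 1 := lt_of_lt_of_le hδ1 (min_le_left _ _)
    have hδρ : δ < ρ / K := lt_of_lt_of_le hδ1 (min_le_right _ _)
    have hKδ0 : 0 < K * δ := by positivity
    have hKδρ : K * δ ≤ ρ := by
      have h := mul_le_mul_of_nonneg_right hδρ.le hK0.le
      calc K*δ = δ*K := by ring
      _ ≤ (ρ/K)*K := h
      _ = ρ := by field_simp
    set g : ℝ → ℝ :=
      fun t => (1/δ) * ∫ x in Set.Ioo (γ' t) (γ' t + δ), |u (t,x) - u (t, γ' t)| with hgdef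
    have hIint : IntegrableOn g (Set.Ioo tm tp) volume := hgint δ hδ0 _ (subset_refl _)
    have hsplit : ∫ t in Set.Ioo tm tp, g t
        = (∫ t in Set.Ioo tm tp ∩ E, g t) + ∫ t in Set.Ioo tm tp \ E, g t :=
      (integral_inter_add_diff hEm hIint).symm
    have hIE : Set.Ioo tm tp ∩ E = E := Set.inter_eq_self_of_subset_right hEsub
    have hIoofin : volume (Set.Ioo tm tp) < ⊤ := by
      rw [Real.volume_Ioo]; exact ENNReal.ofReal_lt_top
    -- bad set estimate
    have hbad : ∫ t in Set.Ioo tm tp \ E, g t ≤ 2*C*ε := by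
      have hdfin : volume (Set.Ioo tm tp \ E) < ⊤ :=
        lt_of_le_of_lt (measure_mono Set.diff_subset) hIoofin
      calc ∫ t in Set.Ioo tm tp \ E, g t ≤ ∫ _t in Set.Ioo tm tp \ E, 2*C := by
            apply setIntegral_mono_on (hIint.mono_set Set.diff_subset)
              (integrableOn_const hdfin.ne) (measurableSet_Ioo.diff hEm)
            intro t _
            exact hgbd δ hδ0 t
        _ = (volume (Set.Ioo tm tp \ E)).toReal * (2*C) := by rw [setIntegral_const]; rfl
        _ ≤ ε * (2*C) := by
            apply mul_le_mul_of_nonneg_right _ (by linarith)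
            calc (volume (Set.Ioo tm tp \ E)).toReal
                ≤ (ENNReal.ofReal ε).toReal := ENNReal.toReal_mono ENNReal.ofReal_ne_top hEvol
            _ = ε := ENNReal.toReal_ofReal hε.le
        _ = 2*C*ε := by ring
    -- cells
    set n : ℕ := ⌈(tp - tm)/δ⌉₊ with hn
    set cc : ℕ → Set ℝ := fun j => Set.Ico (tm + j*δ) (tm + (j+1)*δ) with hcc
    have hccm : ∀ j : ℕ, MeasurableSet (cc j) := fun j => measurableSet_Ico
    have hdisj : ∀ i j : ℕ, i ≠ j → Disjoint (cc i) (cc j) := by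
      have key : ∀ i j : ℕ, i < j → Disjoint (cc i) (cc j) := by
        intro i j hij
        rw [hcc, Set.Ico_disjoint_Ico]
        have hij' : ((i:ℝ)+1) ≤ (j:ℝ) := by exact_mod_cast hij
        calc min (tm+((i:ℝ)+1)*δ) (tm+((j:ℝ)+1)*δ) ≤ tm+((i:ℝ)+1)*δ := min_le_left _ _
        _ ≤ tm + (j:ℝ)*δ := by nlinarith
        _ ≤ max (tm+(i:ℝ)*δ) (tm+(j:ℝ)*δ) := le_max_right _ _
      intro i j hij
      rcases lt_or_gt_of_ne hij with h | h
      · exact key i j h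
      · exact (key j i h).symm
    have hcover : E ⊆ ⋃ j ∈ Finset.range n, cc j := by
      intro t ht
      obtain ⟨ht1, ht2⟩ := hEsub ht
      have hx0 : 0 ≤ (t - tm)/δ := div_nonneg (by linarith) hδ0.le
      have hj1 : ((⌊(t - tm)/δ⌋₊ : ℝ)) ≤ (t-tm)/δ := Nat.floor_le hx0
      have hj2 : (t-tm)/δ < (⌊(t - tm)/δ⌋₊ : ℝ) + 1 := Nat.lt_floor_add_one _
      have hjn : ⌊(t - tm)/δ⌋₊ < n := by
        have h3 : (t - tm)/δ < (tp - tm)/δ := by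
          apply div_lt_div_of_pos_right (by linarith) hδ0
        have h4 : (t-tm)/δ ≤ (n:ℝ) := le_trans (le_of_lt h3) (Nat.le_ceil _)
        have h5 : ((⌊(t - tm)/δ⌋₊ : ℝ)) < (n:ℝ) := lt_of_le_of_lt hj1 (lt_of_lt_of_le h3 (Nat.le_ceil _))
        exact_mod_cast h5
      apply Set.mem_biUnion (Finset.mem_range.2 hjn)
      rw [hcc]
      constructor
      · have : (⌊(t - tm)/δ⌋₊ : ℝ) * δ ≤ t - tm := by
          rw [← le_div_iff₀ hδ0]
          exact hj1
        simpa using by linarith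
      · have : t - tm < ((⌊(t - tm)/δ⌋₊ : ℝ) + 1) * δ := by
          rw [← div_lt_iff₀ hδ0]
          exact hj2
        simpa using by linarith
    have hEdec : E = ⋃ j ∈ Finset.range n, (E ∩ cc j) := by
      ext t
      simp only [Set.mem_iUnion, Set.mem_inter_iff, exists_prop]
      constructor
      · intro ht
        have := hcover ht
        simp only [Set.mem_iUnion, exists_prop] at this
        obtain ⟨j, hj, hjt⟩ := this
        exact ⟨j, hj, ht, hjt⟩
      · rintro ⟨j, _, ht, _⟩
        exact ht
    have hcellint : ∀ j : ℕ, IntegrableOn g (E ∩ cc j) volume :=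
      fun j => hIint.mono_set ((Set.inter_subset_left).trans hEsub)
    have hgood : ∫ t in E, g t = ∑ j ∈ Finset.range n, ∫ t in E ∩ cc j, g t := by
      conv_lhs => rw [hEdec]
      apply integral_biUnion_finset
      · exact fun j _ => hEm.inter (hccm j)
      · intro i _ j _ hij
        exact (hdisj i j hij).mono Set.inter_subset_right Set.inter_subset_right
      · exact fun j _ => hcellint j
    -- per-cell estimate
    have hcell : ∀ j ∈ Finset.range n, ∫ t in E ∩ cc j, g t
        ≤ Real.pi*K^2*δ*ε + 8*ε*(volume (E ∩ cc j)).toReal := by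
      intro j _
      rcases Set.eq_empty_or_nonempty (E ∩ cc j) with he | hne
      · rw [he]
        simp only [Measure.restrict_empty, integral_zero_measure, measure_empty,
          ENNReal.toReal_zero]
        have : (0:ℝ) ≤ Real.pi*K^2*δ*ε := by positivity
        linarith
      · obtain ⟨tj, htjE, htjc⟩ := hne
        set pj : ℝ × ℝ := (tj, γ' tj) with hpj
        have htjI : tj ∈ Set.Ioo tm tp := hEsub htjE
        have hIcotj : tm + (j:ℝ)*δ ≤ tj ∧ tj < tm + ((j:ℝ)+1)*δ := by
          rw [hcc] at htjc; exact ⟨htjc.1, htjc.2⟩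
        -- geometric facts
        have hgeom : ∀ t ∈ E ∩ cc j, (t - tj)^2 ≤ δ^2 ∧ (γ' t - γ' tj)^2 ≤ ((L:ℝ)*δ)^2 := by
          rintro t ⟨htE, htc⟩
          rw [hcc] at htc
          obtain ⟨htc1, htc2⟩ := htc
          have h1 : (t - tj)^2 ≤ δ^2 := by nlinarith [hIcotj.1, hIcotj.2]
          constructor
          · exact h1
          · have h := hγ'L.dist_le_mul t tj
            rw [Real.dist_eq, Real.dist_eq] at h
            have h2 : |γ' t - γ' tj| ≤ (L:ℝ) * |t - tj| := h
            have h3 : |t - tj| ≤ δ := by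
              rw [abs_le]
              constructor <;> nlinarith [hIcotj.1, hIcotj.2]
            have h4 : |γ' t - γ' tj| ≤ (L:ℝ)*δ :=
              le_trans h2 (mul_le_mul_of_nonneg_left h3 hL0)
            nlinarith [abs_nonneg (γ' t - γ' tj), sq_abs (γ' t - γ' tj)]
        have hball : ∀ t ∈ E ∩ cc j, ∀ x ∈ Set.Ioo (γ' t) (γ' t + δ),
            (t, x) ∈ Eball pj (K*δ) := by
          intro t htmem x hx
          obtain ⟨hg1, hg2⟩ := hgeom t htmem
          obtain ⟨hx1, hx2⟩ := hx
          have hxg : (x - γ' t)^2 ≤ δ^2 := by nlinarith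
          have habs : |γ' t - γ' tj| ≤ (L:ℝ)*δ := by
            rw [← Real.sqrt_sq_eq_abs]
            rw [show ((L:ℝ)*δ) = Real.sqrt (((L:ℝ)*δ)^2) from (Real.sqrt_sq (by positivity)).symm]
            exact Real.sqrt_le_sqrt hg2
          show (t - pj.1)^2 + (x - pj.2)^2 < (K*δ)^2
          have hxj : (x - γ' tj)^2 ≤ ((1+(L:ℝ))*δ)^2 := by
            have : |x - γ' tj| ≤ (1+(L:ℝ))*δ := by
              calc |x - γ' tj| ≤ |x - γ' t| + |γ' t - γ' tj| := abs_sub_le _ _ _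
              _ ≤ δ + (L:ℝ)*δ := by
                  apply add_le_add _ habs
                  rw [abs_le]; constructor <;> nlinarith
              _ = (1+(L:ℝ))*δ := by ring
            nlinarith [abs_nonneg (x - γ' tj), sq_abs (x - γ' tj)]
          have hKδ2 : (K*δ)^2 = (2+2*(L:ℝ))^2*δ^2 := by rw [hK]; ring
          rw [hpj, hKδ2]
          simp only
          nlinarith [hδ0, hL0]
        have htrace : ∀ t ∈ E ∩ cc j, |u pj - u (t, γ' t)| ≤ 8*ε := by
          intro t htmem
          obtain ⟨hg1, hg2⟩ := hgeom t htmem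
          have hd : ((t, γ' t).1 - pj.1)^2 + ((t, γ' t).2 - pj.2)^2 ≤ ((K*δ)/2)^2 := by
            rw [hpj]
            simp only
            have : ((K*δ)/2)^2 = (1+(L:ℝ))^2*δ^2 := by rw [hK]; ring
            rw [this]
            nlinarith [hδ0, hL0]
          have h := trace_cmp hmeas hbd hKδ0 hd
          have e1 : Lavg u γ' (K*δ) t ≤ ε := hEunif t htmem.1 (K*δ) hKδ0 hKδρ
          have e2 : Lavg u γ' (K*δ) tj ≤ ε := hEunif tj htjE (K*δ) hKδ0 hKδρ
          rw [abs_sub_comm]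
          calc |u (t, γ' t) - u pj|
              ≤ 4 * Lavg u γ' (K*δ) t + 4 * Lavg u γ' (K*δ) tj := h
          _ ≤ 8*ε := by linarith
        have hIoofin' : ∀ a : ℝ, volume (Set.Ioo a (a + δ)) < ⊤ := by
          intro a; rw [Real.volume_Ioo]; exact ENNReal.ofReal_lt_top
        have hgb : ∀ t ∈ E ∩ cc j, g t
            ≤ (1/δ) * (∫ x in Set.Ioo (γ' t) (γ' t + δ), |u (t,x) - u pj|) + 8*ε := by
          intro t htmem
          have h1 : ∫ x in Set.Ioo (γ' t) (γ' t+δ), |u (t,x) - u (t, γ' t)|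
              ≤ (∫ x in Set.Ioo (γ' t) (γ' t+δ), |u (t,x) - u pj|) + δ*(8*ε) := by
            have hci : IntegrableOn (fun _x : ℝ => |u pj - u (t, γ' t)|)
                (Set.Ioo (γ' t) (γ' t + δ)) volume :=
              integrableOn_const (hIoofin' (γ' t)).ne
            have step : ∫ x in Set.Ioo (γ' t) (γ' t+δ), |u (t,x) - u (t,γ' t)|
                ≤ ∫ x in Set.Ioo (γ' t) (γ' t+δ), (|u (t,x) - u pj| + |u pj - u (t,γ' t)|) := by
              apply setIntegral_mono_on (integrableOn_abs_sub_line hmeas hbd _ t _ _)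
                ((integrableOn_abs_sub_line hmeas hbd _ t _ _).add hci) measurableSet_Ioo
              intro x _
              exact abs_sub_le _ _ _
            rw [integral_add (integrableOn_abs_sub_line hmeas hbd _ t _ _) hci] at step
            have hconst : ∫ _x in Set.Ioo (γ' t) (γ' t+δ), |u pj - u (t,γ' t)|
                = δ * |u pj - u (t,γ' t)| := by
              rw [setIntegral_const, smul_eq_mul, measureReal_def, Real.volume_Ioo,
                show γ' t + δ - γ' t = δ by ring, ENNReal.toReal_ofReal hδ0.le]
            rw [hconst] at step
            have htr := htrace t htmem
            have : δ * |u pj - u (t,γ' t)| ≤ δ * (8*ε) :=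
              mul_le_mul_of_nonneg_left htr hδ0.le
            linarith
          calc g t
              ≤ (1/δ) * ((∫ x in Set.Ioo (γ' t) (γ' t+δ), |u (t,x) - u pj|) + δ*(8*ε)) :=
                mul_le_mul_of_nonneg_left h1 (by positivity)
          _ = (1/δ) * (∫ x in Set.Ioo (γ' t) (γ' t+δ), |u (t,x) - u pj|) + 8*ε := by
                field_simp
        have hvolfin : volume (E ∩ cc j) < ⊤ :=
          lt_of_le_of_lt (measure_mono ((Set.inter_subset_left).trans hEsub)) hIoofin
        have hint1 : IntegrableOn
            (fun t => (1/δ) * ∫ x in Set.Ioo (γ' t) (γ' t+δ), |u (t,x) - u pj|)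
            (E ∩ cc j) volume := by
          apply Measure.integrableOn_of_bounded (M := (1/δ)*(2*C*δ))
          · exact hvolfin.ne
          · exact ((meas_param_line hmeas hγ'm measurable_const δ).const_mul _).aestronglyMeasurable
          · filter_upwards with t
            rw [Real.norm_eq_abs, abs_of_nonneg (mul_nonneg (by positivity)
              (setIntegral_nonneg measurableSet_Ioo fun x _ => abs_nonneg _))]
            exact mul_le_mul_of_nonneg_left (hline_bd t (u pj) (γ' t) δ hδ0 (hbd pj))
              (by positivity)
        have hconst2 : IntegrableOn (fun _t : ℝ => (8:ℝ)*ε) (E ∩ cc j) volume :=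
          integrableOn_const hvolfin.ne
        calc ∫ t in E ∩ cc j, g t
            ≤ ∫ t in E ∩ cc j,
              ((1/δ) * (∫ x in Set.Ioo (γ' t) (γ' t + δ), |u (t,x) - u pj|) + 8*ε) :=
              setIntegral_mono_on (hcellint j) (hint1.add hconst2) (hEm.inter (hccm j)) hgb
        _ = (1/δ) * (∫ t in E ∩ cc j, ∫ x in Set.Ioo (γ' t) (γ' t + δ), |u (t,x) - u pj|)
              + (volume (E ∩ cc j)).toReal * (8*ε) := by
            rw [integral_add hint1 hconst2, setIntegral_const, smul_eq_mul, measureReal_def, integral_const_mul]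
        _ ≤ (1/δ) * (∫ z in Eball pj (K*δ), |u z - u pj|)
              + (volume (E ∩ cc j)).toReal * (8*ε) := by
            apply add_le_add _ le_rfl
            exact mul_le_mul_of_nonneg_left
              (cell_bound hmeas hbd hγ'm (hEm.inter (hccm j)) hδ0 hKδ0 hball) (by positivity)
        _ ≤ Real.pi*K^2*δ*ε + 8*ε*(volume (E ∩ cc j)).toReal := by
            have hLtj : Lavg u γ' (K*δ) tj ≤ ε := hEunif tj htjE _ hKδ0 hKδρ
            have hvol : (volume (Eball pj (K*δ))).toReal = Real.pi * (K*δ)^2 :=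
              volume_Eball_toReal _ _ hKδ0
            have hp : 0 < Real.pi*(K*δ)^2 := by positivity
            have hb : ∫ z in Eball pj (K*δ), |u z - u pj| ≤ Real.pi*(K*δ)^2 * ε := by
              have h := hLtj
              rw [show Lavg u γ' (K*δ) tj = (volume (Eball pj (K*δ))).toReal⁻¹ *
                ∫ z in Eball pj (K*δ), |u z - u pj| from rfl, hvol, inv_mul_le_iff₀ hp] at h
              exact h
            have : (1/δ) * (∫ z in Eball pj (K*δ), |u z - u pj|)
                ≤ (1/δ)*(Real.pi*(K*δ)^2*ε) := mul_le_mul_of_nonneg_left hb (by positivity)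
            have heq : (1/δ)*(Real.pi*(K*δ)^2*ε) = Real.pi*K^2*δ*ε := by
              field_simp
            linarith
    -- sum up
    have hvolfin' : ∀ j : ℕ, volume (E ∩ cc j) ≠ ⊤ := fun j =>
      (lt_of_le_of_lt (measure_mono ((Set.inter_subset_left).trans hEsub)) hIoofin).ne
    have hsum2 : ∑ j ∈ Finset.range n, (volume (E ∩ cc j)).toReal ≤ tp - tm := by
      have h1 : ∑ j ∈ Finset.range n, volume (E ∩ cc j) = volume E := by
        rw [← measure_biUnion_finset ?_ (fun j _ => hEm.inter (hccm j)), ← hEdec]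
        intro i _ j _ hij
        exact (hdisj i j hij).mono Set.inter_subset_right Set.inter_subset_right
      have h2 : volume E ≤ ENNReal.ofReal (tp - tm) := by
        rw [← Real.volume_Ioo]; exact measure_mono hEsub
      rw [← ENNReal.toReal_sum (fun j _ => hvolfin' j), h1]
      calc (volume E).toReal ≤ (ENNReal.ofReal (tp - tm)).toReal :=
          ENNReal.toReal_mono ENNReal.ofReal_ne_top h2
      _ = tp - tm := ENNReal.toReal_ofReal htm'
    have hnδ : (n:ℝ) * δ ≤ (tp - tm) + 1 := by
      have h0 : 0 ≤ (tp - tm)/δ := div_nonneg htm' hδ0.le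
      have h1 : (n:ℝ) < (tp - tm)/δ + 1 := Nat.ceil_lt_add_one h0
      have h2 := mul_le_mul_of_nonneg_right h1.le hδ0.le
      calc (n:ℝ)*δ ≤ ((tp-tm)/δ + 1)*δ := h2
      _ = (tp - tm) + δ := by field_simp
      _ ≤ (tp-tm)+1 := by linarith
    calc ∫ t in Set.Ioo tm tp, g t
        = (∫ t in E, g t) + ∫ t in Set.Ioo tm tp \ E, g t := by rw [hsplit, hIE]
    _ ≤ (∑ j ∈ Finset.range n, (Real.pi*K^2*δ*ε + 8*ε*(volume (E ∩ cc j)).toReal)) + 2*C*ε := by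
        rw [hgood]
        exact add_le_add (Finset.sum_le_sum hcell) hbad
    _ = (n:ℝ)*(Real.pi*K^2*δ*ε)
          + 8*ε*(∑ j ∈ Finset.range n, (volume (E ∩ cc j)).toReal) + 2*C*ε := by
        rw [Finset.sum_add_distrib, Finset.sum_const, Finset.card_range, ← Finset.mul_sum]
        push_cast
        ring
    _ ≤ M * ε := by
        have e1 : (n:ℝ)*(Real.pi*K^2*δ*ε) = Real.pi*K^2*ε*((n:ℝ)*δ) := by ring
        have e2 : Real.pi*K^2*ε*((n:ℝ)*δ) ≤ Real.pi*K^2*ε*((tp-tm)+1) :=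
          mul_le_mul_of_nonneg_left hnδ (by positivity)
        have e3 : 8*ε*(∑ j ∈ Finset.range n, (volume (E ∩ cc j)).toReal) ≤ 8*ε*(tp-tm) :=
          mul_le_mul_of_nonneg_left hsum2 (by positivity)
        have heqM : M * ε = 2*C*ε + Real.pi*K^2*ε*((tp-tm)+1) + 8*ε*(tp-tm) := by
          rw [hM]; ring
        linarith
  -- conclude
  have hfun : (fun δ : ℝ => ∫ t in Set.Ioo tm tp,
        (1 / δ) * ∫ x in Set.Ioo (γ t) (γ t + δ), |u (t, x) - u (t, γ t)|)
      = fun δ : ℝ => ∫ t in Set.Ioo tm tp,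
        (1 / δ) * ∫ x in Set.Ioo (γ' t) (γ' t + δ), |u (t, x) - u (t, γ' t)| :=
    funext hgoal_eq
  rw [hfun, Metric.tendsto_nhdsWithin_nhds]
  intro ε hε
  obtain ⟨δ₁, hδ₁0, hmain⟩ := main (ε/(M+1)/2) (by positivity)
  refine ⟨δ₁, hδ₁0, ?_⟩
  intro x hx hdist
  rw [Real.dist_eq, sub_zero] at hdist ⊢
  have hx0 : 0 < x := hx
  have hxδ : x < δ₁ := lt_of_le_of_lt (le_abs_self x) hdist
  have h1 := hmain x hx0 hxδ
  have h2 : 0 ≤ ∫ t in Set.Ioo tm tp,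
      (1/x) * ∫ s in Set.Ioo (γ' t) (γ' t + x), |u (t,s) - u (t, γ' t)| :=
    setIntegral_nonneg measurableSet_Ioo fun t _ => hgnn x hx0 t
  rw [abs_of_nonneg h2]
  calc ∫ t in Set.Ioo tm tp, (1/x) * ∫ s in Set.Ioo (γ' t) (γ' t + x), |u (t,s) - u (t, γ' t)|
      ≤ M * (ε/(M+1)/2) := h1
  _ ≤ (M+1) * (ε/(M+1)/2) := by
      apply mul_le_mul_of_nonneg_right (by linarith) (by positivity)
  _ = ε/2 := by field_simp
  _ < ε := by linarith
end

section
/- Let μ be a signed finite Radon measure on a measurable space, and suppose there exist families of finite nonnegative measures (μ_γ^−), (μ_γ^+) indexed by γ, and finite measures ω_h, ω_e with ∫ μ_γ dω_h(γ) = μ = −∫ μ_γ dω_e(γ) and ∫ |μ_γ| dω_h(γ) = |μ| = ∫ |μ_γ| dω_e(γ). Then ∫ μ_γ^− dω_h(γ) = μ^− = ∫ μ_γ^+ dω_e(γ) and ∫ μ_γ^+ dω_h(γ) = μ^+ = ∫ μ_γ^− dω_e(γ), where μ = μ^+ − μ^− is the Hahn–Jordan decomposition. -/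
open MeasureTheory Set

lemma stmt16_aux {α Γ : Type*} [MeasurableSpace α] [MeasurableSpace Γ]
    (μ1 μ2 : Measure α) [IsFiniteMeasure μ1] [IsFiniteMeasure μ2]
    (ω : Measure Γ) (P N : Γ → Measure α)
    (hPm : ∀ s : Set α, MeasurableSet s → Measurable fun γ => P γ s)
    (hNm : ∀ s : Set α, MeasurableSet s → Measurable fun γ => N γ s)
    (hfin : (∫⁻ γ, (P γ Set.univ + N γ Set.univ) ∂ω) ≠ ⊤)
    (s : Set α) (hs : MeasurableSet s)
    (heq : (∫ γ, ((P γ s).toReal - (N γ s).toReal) ∂ω)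
        = (μ1 s).toReal - (μ2 s).toReal)
    (hvar : (∫⁻ γ, (P γ s + N γ s) ∂ω) = μ1 s + μ2 s) :
    (∫⁻ γ, P γ s ∂ω) = μ1 s ∧ (∫⁻ γ, N γ s ∂ω) = μ2 s := by
  have hsum : (∫⁻ γ, P γ s ∂ω) + (∫⁻ γ, N γ s ∂ω) = μ1 s + μ2 s := by
    rw [← lintegral_add_left (hPm s hs)]; exact hvar
  have hfinsum : μ1 s + μ2 s ≠ ⊤ := by finiteness
  have hfP : (∫⁻ γ, P γ s ∂ω) ≠ ⊤ := by
    intro h; rw [h] at hsum; simp at hsum; exact hfinsum hsum.symm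
  have hfN : (∫⁻ γ, N γ s ∂ω) ≠ ⊤ := by
    intro h; rw [h] at hsum
    simp only [add_top] at hsum
    exact hfinsum hsum.symm
  have hiP : Integrable (fun γ => (P γ s).toReal) ω :=
    integrable_toReal_of_lintegral_ne_top (hPm s hs).aemeasurable hfP
  have hiN : Integrable (fun γ => (N γ s).toReal) ω :=
    integrable_toReal_of_lintegral_ne_top (hNm s hs).aemeasurable hfN
  have haeP : ∀ᵐ γ ∂ω, P γ s < ⊤ := by
    refine ae_lt_top (hPm s hs) hfP
  have haeN : ∀ᵐ γ ∂ω, N γ s < ⊤ := ae_lt_top (hNm s hs) hfN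
  have hIP : ∫ γ, (P γ s).toReal ∂ω = (∫⁻ γ, P γ s ∂ω).toReal :=
    integral_toReal (hPm s hs).aemeasurable haeP
  have hIN : ∫ γ, (N γ s).toReal ∂ω = (∫⁻ γ, N γ s ∂ω).toReal :=
    integral_toReal (hNm s hs).aemeasurable haeN
  rw [integral_sub hiP hiN, hIP, hIN] at heq
  have hsumR : (∫⁻ γ, P γ s ∂ω).toReal + (∫⁻ γ, N γ s ∂ω).toReal
      = (μ1 s).toReal + (μ2 s).toReal := by
    rw [← ENNReal.toReal_add hfP hfN, hsum,
      ENNReal.toReal_add (measure_ne_top _ _) (measure_ne_top _ _)]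
  have h1 : (∫⁻ γ, P γ s ∂ω).toReal = (μ1 s).toReal := by linarith
  have h2 : (∫⁻ γ, N γ s ∂ω).toReal = (μ2 s).toReal := by linarith
  exact ⟨(ENNReal.toReal_eq_toReal_iff' hfP (measure_ne_top _ _)).mp h1,
    (ENNReal.toReal_eq_toReal_iff' hfN (measure_ne_top _ _)).mp h2⟩

/-- If a signed measure `μ = μp − μn` (Jordan decomposition) is represented along
curves both by `ω_h` and (with opposite sign) by `ω_e`, with equality of total
variations, then positive and negative parts are represented separately. -/
theorem stmt16 {α Γ : Type*} [MeasurableSpace α] [MeasurableSpace Γ]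
    (μp μn : Measure α) [IsFiniteMeasure μp] [IsFiniteMeasure μn]
    (hμ : μp ⟂ₘ μn)
    (ωh ωe : Measure Γ) [IsFiniteMeasure ωh] [IsFiniteMeasure ωe]
    (P N : Γ → Measure α)
    (hPN : ∀ γ, P γ ⟂ₘ N γ)
    (hPm : ∀ s : Set α, MeasurableSet s → Measurable fun γ => P γ s)
    (hNm : ∀ s : Set α, MeasurableSet s → Measurable fun γ => N γ s)
    (hfinh : (∫⁻ γ, (P γ Set.univ + N γ Set.univ) ∂ωh) ≠ ⊤)
    (hfine : (∫⁻ γ, (P γ Set.univ + N γ Set.univ) ∂ωe) ≠ ⊤)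
    (heqh : ∀ s : Set α, MeasurableSet s →
      (∫ γ, ((P γ s).toReal - (N γ s).toReal) ∂ωh)
        = (μp s).toReal - (μn s).toReal)
    (heqe : ∀ s : Set α, MeasurableSet s →
      (∫ γ, ((P γ s).toReal - (N γ s).toReal) ∂ωe)
        = (μn s).toReal - (μp s).toReal)
    (hvarh : ∀ s : Set α, MeasurableSet s →
      (∫⁻ γ, (P γ s + N γ s) ∂ωh) = μp s + μn s)
    (hvare : ∀ s : Set α, MeasurableSet s →
      (∫⁻ γ, (P γ s + N γ s) ∂ωe) = μp s + μn s) :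
    ∀ s : Set α, MeasurableSet s →
      (∫⁻ γ, N γ s ∂ωh) = μn s ∧ (∫⁻ γ, P γ s ∂ωe) = μn s ∧
      (∫⁻ γ, P γ s ∂ωh) = μp s ∧ (∫⁻ γ, N γ s ∂ωe) = μp s := by
  intro s hs
  have Hh := stmt16_aux μp μn ωh P N hPm hNm hfinh s hs (heqh s hs) (hvarh s hs)
  have He := stmt16_aux μn μp ωe P N hPm hNm hfine s hs (heqe s hs)
    (by rw [hvare s hs, add_comm])
  exact ⟨Hh.2, He.1, Hh.1, He.2⟩
end
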